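/- arXiv:1706.03092 — 7 statements merged into one kernel-verified Lean document; each statement's English description precedes it below -/
import Mathlib

section
/- For any partition of the vertex set of a split graph G into a clique K and a stable set S, exactly one of the following holds: (i) |K| = ω(G) and |S| = α(G); (ii) |K| = ω(G) − 1 and |S| = α(G); (iii) |K| = ω(G) and |S| = α(G) − 1. -/
open SimpleGraph
attribute [local instance] Classical.propDecidable

variable {V : Type*} [Fintype V] [DecidableEq V]

/-- A set of vertices is stable (independent) if no two of its elements are adjacent. -/
def IsStableSet (G : SimpleGraph V) (s : Set V) : Prop :=
  s.Pairwise fun a b => ¬ G.Adj a b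

/-- The clique number ω(G). -/
noncomputable def omegaNum (G : SimpleGraph V) : ℕ :=
  Finset.univ.sup fun s : Finset V => if G.IsClique (s : Set V) then s.card else 0

/-- The independence number α(G). -/
noncomputable def alphaNum (G : SimpleGraph V) : ℕ :=
  Finset.univ.sup fun s : Finset V => if IsStableSet G (s : Set V) then s.card else 0

/-- A KS-partition of `G`: a partition of the vertex set into a clique `K` and a stable set `S`. -/
def IsKSPartition (G : SimpleGraph V) (K S : Finset V) : Prop :=
  Disjoint K S ∧ K ∪ S = Finset.univ ∧ G.IsClique (K : Set V) ∧ IsStableSet G (S : Set V)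

set_option linter.unusedSectionVars false
lemma exists_omega_clique (G : SimpleGraph V) :
    ∃ C : Finset V, G.IsClique (C : Set V) ∧ C.card = omegaNum G := by
  obtain ⟨C, -, hC⟩ := Finset.exists_mem_eq_sup (Finset.univ : Finset (Finset V))
    ⟨∅, Finset.mem_univ _⟩
    (fun s : Finset V => if G.IsClique (s : Set V) then s.card else 0)
  by_cases hcl : G.IsClique (C : Set V)
  · exact ⟨C, hcl, by rw [omegaNum, hC]; simp [if_pos hcl]⟩
  · refine ⟨∅, by simp [SimpleGraph.IsClique], ?_⟩
    rw [Finset.card_empty, omegaNum, hC]; simp [if_neg hcl]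

lemma exists_alpha_stable (G : SimpleGraph V) :
    ∃ T : Finset V, IsStableSet G (T : Set V) ∧ T.card = alphaNum G := by
  obtain ⟨T, -, hT⟩ := Finset.exists_mem_eq_sup (Finset.univ : Finset (Finset V))
    ⟨∅, Finset.mem_univ _⟩
    (fun s : Finset V => if IsStableSet G (s : Set V) then s.card else 0)
  by_cases hst : IsStableSet G (T : Set V)
  · exact ⟨T, hst, by rw [alphaNum, hT]; simp [if_pos hst]⟩
  · refine ⟨∅, by simp [IsStableSet], ?_⟩
    rw [Finset.card_empty, alphaNum, hT]; simp [if_neg hst]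

lemma clique_card_le_omega (G : SimpleGraph V) {C : Finset V}
    (hC : G.IsClique (C : Set V)) : C.card ≤ omegaNum G := by
  have := Finset.le_sup (f := fun s : Finset V =>
    if G.IsClique (s : Set V) then s.card else 0) (Finset.mem_univ C)
  simpa [if_pos hC, omegaNum] using this

lemma stable_card_le_alpha (G : SimpleGraph V) {T : Finset V}
    (hT : IsStableSet G (T : Set V)) : T.card ≤ alphaNum G := by
  have := Finset.le_sup (f := fun s : Finset V =>
    if IsStableSet G (s : Set V) then s.card else 0) (Finset.mem_univ T)
  simpa [if_pos hT, alphaNum] using this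

/-- A clique meets a stable set in at most one vertex. -/
lemma clique_inter_stable (G : SimpleGraph V) {C T : Finset V}
    (hC : G.IsClique (C : Set V)) (hT : IsStableSet G (T : Set V)) :
    (C ∩ T).card ≤ 1 := by
  refine Finset.card_le_one.mpr fun a ha b hb => ?_
  rw [Finset.mem_inter] at ha hb
  by_contra hne
  exact hT (by exact_mod_cast ha.2) (by exact_mod_cast hb.2) hne
    (hC (by exact_mod_cast ha.1) (by exact_mod_cast hb.1) hne)

lemma card_split (G : SimpleGraph V) {K S : Finset V} (h : IsKSPartition G K S)
    (C : Finset V) : C.card ≤ (C ∩ K).card + (C ∩ S).card := by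
  have : C = (C ∩ K) ∪ (C ∩ S) := by
    rw [← Finset.inter_union_distrib_left, h.2.1, Finset.inter_univ]
  calc C.card = ((C ∩ K) ∪ (C ∩ S)).card := by rw [← this]
    _ ≤ (C ∩ K).card + (C ∩ S).card := Finset.card_union_le _ _

lemma key_bounds (G : SimpleGraph V) {K S : Finset V} (h : IsKSPartition G K S) :
    K.card ≤ omegaNum G ∧ omegaNum G ≤ K.card + 1 ∧
    S.card ≤ alphaNum G ∧ alphaNum G ≤ S.card + 1 ∧
    ¬ (omegaNum G = K.card + 1 ∧ alphaNum G = S.card + 1) := by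
  obtain ⟨hdisj, hunion, hKcl, hSst⟩ := h
  refine ⟨clique_card_le_omega G hKcl, ?_, stable_card_le_alpha G hSst, ?_, ?_⟩
  · obtain ⟨C, hCcl, hCcard⟩ := exists_omega_clique G
    have h1 := clique_inter_stable G hCcl hSst
    have h2 : (C ∩ K).card ≤ K.card := Finset.card_le_card (Finset.inter_subset_right)
    have h3 := card_split G ⟨hdisj, hunion, hKcl, hSst⟩ C
    omega
  · obtain ⟨T, hTst, hTcard⟩ := exists_alpha_stable G
    have h1 : (T ∩ K).card ≤ 1 := by
      have := clique_inter_stable G hKcl hTst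
      rwa [Finset.inter_comm] at this
    have h2 : (T ∩ S).card ≤ S.card := Finset.card_le_card (Finset.inter_subset_right)
    have h3 := card_split G ⟨hdisj, hunion, hKcl, hSst⟩ T
    omega
  · rintro ⟨hω, hα⟩
    obtain ⟨C, hCcl, hCcard⟩ := exists_omega_clique G
    obtain ⟨T, hTst, hTcard⟩ := exists_alpha_stable G
    -- analyze C
    have hCS := clique_inter_stable G hCcl hSst
    have hCK : (C ∩ K).card ≤ K.card := Finset.card_le_card (Finset.inter_subset_right)
    have hCsplit := card_split G ⟨hdisj, hunion, hKcl, hSst⟩ C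
    have hCKeq : (C ∩ K).card = K.card := by omega
    have hCSeq : (C ∩ S).card = 1 := by omega
    have hKsub : K ⊆ C := by
      have : C ∩ K = K := Finset.eq_of_subset_of_card_le
        (Finset.inter_subset_right) (le_of_eq hCKeq.symm)
      intro x hx; have := this ▸ hx; exact (Finset.mem_inter.mp this).1
    obtain ⟨s₀, hs₀⟩ := Finset.card_eq_one.mp hCSeq
    have hs₀C : s₀ ∈ C ∧ s₀ ∈ S := by
      have : s₀ ∈ C ∩ S := hs₀ ▸ Finset.mem_singleton_self s₀
      exact Finset.mem_inter.mp this
    -- analyze T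
    have hTK : (T ∩ K).card ≤ 1 := by
      have := clique_inter_stable G hKcl hTst
      rwa [Finset.inter_comm] at this
    have hTS : (T ∩ S).card ≤ S.card := Finset.card_le_card (Finset.inter_subset_right)
    have hTsplit := card_split G ⟨hdisj, hunion, hKcl, hSst⟩ T
    have hTSeq : (T ∩ S).card = S.card := by omega
    have hTKeq : (T ∩ K).card = 1 := by omega
    have hSsub : S ⊆ T := by
      have : T ∩ S = S := Finset.eq_of_subset_of_card_le
        (Finset.inter_subset_right) (le_of_eq hTSeq.symm)
      intro x hx; have := this ▸ hx; exact (Finset.mem_inter.mp this).1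
    obtain ⟨k₀, hk₀⟩ := Finset.card_eq_one.mp hTKeq
    have hk₀T : k₀ ∈ T ∧ k₀ ∈ K := by
      have : k₀ ∈ T ∩ K := hk₀ ▸ Finset.mem_singleton_self k₀
      exact Finset.mem_inter.mp this
    have hne : k₀ ≠ s₀ := fun e =>
      Finset.disjoint_left.mp hdisj (e ▸ hk₀T.2) hs₀C.2
    have hadj : G.Adj k₀ s₀ :=
      hCcl (by exact_mod_cast hKsub hk₀T.2) (by exact_mod_cast hs₀C.1) hne
    exact hTst (by exact_mod_cast hk₀T.1) (by exact_mod_cast hSsub hs₀C.2) hne hadj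

/-- `G` is a split graph. -/
def IsSplit (G : SimpleGraph V) : Prop := ∃ K S : Finset V, IsKSPartition G K S

/-- A split graph is balanced if it has a KS-partition with `|K| = ω(G)` and `|S| = α(G)`. -/
def IsBalanced (G : SimpleGraph V) : Prop :=
  ∃ K S : Finset V, IsKSPartition G K S ∧ K.card = omegaNum G ∧ S.card = alphaNum G

/-- For any KS-partition of a split graph, exactly one of (i) |K|=ω, |S|=α;
(ii) |K|=ω−1, |S|=α; (iii) |K|=ω, |S|=α−1 holds. -/
theorem hammer_simeone_trichotomy (G : SimpleGraph V) (K S : Finset V)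
    (h : IsKSPartition G K S) :
    let A := K.card = omegaNum G ∧ S.card = alphaNum G
    let B := (K.card : ℤ) = (omegaNum G : ℤ) - 1 ∧ S.card = alphaNum G
    let C := K.card = omegaNum G ∧ (S.card : ℤ) = (alphaNum G : ℤ) - 1
    (A ∧ ¬ B ∧ ¬ C) ∨ (¬ A ∧ B ∧ ¬ C) ∨ (¬ A ∧ ¬ B ∧ C) := by
  obtain ⟨h1, h2, h3, h4, h5⟩ := key_bounds G h
  dsimp only
  omega
end

section
/- For any KS-partition of a split graph G with |K| = ω(G) − 1 and |S| = α(G), there exists a vertex s ∈ S such that K ∪ {s} induces a clique in G. -/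
open SimpleGraph
attribute [local instance] Classical.propDecidable

variable {V : Type*} [Fintype V] [DecidableEq V]

/-- For a KS-partition with |K| = ω(G) − 1 and |S| = α(G), there is s ∈ S with K ∪ {s} a clique. -/
theorem exists_swing_in_S (G : SimpleGraph V) (K S : Finset V)
    (h : IsKSPartition G K S)
    (hK : (K.card : ℤ) = (omegaNum G : ℤ) - 1) (hS : S.card = alphaNum G) :
    ∃ s ∈ S, G.IsClique ((insert s K : Finset V) : Set V) := by
  obtain ⟨hdisj, huniv, hKcl, hSst⟩ := h
  have hω : omegaNum G = K.card + 1 := by omega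
  obtain ⟨C, -, hC⟩ := Finset.exists_mem_eq_sup (Finset.univ : Finset (Finset V))
    Finset.univ_nonempty (fun s : Finset V => if G.IsClique (s : Set V) then s.card else 0)
  rw [omegaNum] at hω
  rw [hC] at hω
  by_cases hcl : G.IsClique (C : Set V)
  · rw [if_pos hcl] at hω
    -- find s ∈ C ∩ S
    have hex : ∃ s ∈ C, s ∈ S := by
      by_contra hno
      push_neg at hno
      have hsub : C ⊆ K := by
        intro x hx
        have hx' : x ∈ K ∪ S := huniv ▸ Finset.mem_univ x
        rcases Finset.mem_union.mp hx' with h1 | h2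
        · exact h1
        · exact absurd h2 (hno x hx)
      have := Finset.card_le_card hsub
      omega
    obtain ⟨s, hsC, hsS⟩ := hex
    refine ⟨s, hsS, ?_⟩
    have herase : C.erase s ⊆ K := by
      intro x hx
      obtain ⟨hxs, hxC⟩ := Finset.mem_erase.mp hx
      have hx' : x ∈ K ∪ S := huniv ▸ Finset.mem_univ x
      rcases Finset.mem_union.mp hx' with h1 | h2
      · exact h1
      · exact absurd (hcl hxC hsC hxs) (hSst h2 hsS hxs)
    have hcard : K.card ≤ (C.erase s).card := by
      rw [Finset.card_erase_of_mem hsC]; omega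
    have heq : C.erase s = K := Finset.eq_of_subset_of_card_le herase hcard
    have : insert s K = C := by rw [← heq, Finset.insert_erase hsC]
    rw [this]
    exact hcl
  · rw [if_neg hcl] at hω
    omega
end

section
/- For any KS-partition of a split graph G with |K| = ω(G) and |S| = α(G) − 1, there exists a vertex k ∈ K such that S ∪ {k} is a stable set in G. -/
open SimpleGraph
attribute [local instance] Classical.propDecidable

variable {V : Type*} [Fintype V] [DecidableEq V]

/-- For a KS-partition with |K| = ω(G) and |S| = α(G) − 1, there is k ∈ K with S ∪ {k} stable. -/
theorem exists_swing_in_K (G : SimpleGraph V) (K S : Finset V)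
    (h : IsKSPartition G K S)
    (hK : K.card = omegaNum G) (hS : (S.card : ℤ) = (alphaNum G : ℤ) - 1) :
    ∃ k ∈ K, IsStableSet G ((insert k S : Finset V) : Set V) := by
  obtain ⟨hdisj, huniv, hclique, hstab⟩ := h
  have hα : alphaNum G = S.card + 1 := by omega
  obtain ⟨A, -, hA⟩ := Finset.exists_mem_eq_sup (Finset.univ : Finset (Finset V))
    Finset.univ_nonempty (fun s : Finset V => if IsStableSet G (s : Set V) then s.card else 0)
  rw [show (Finset.univ.sup fun s : Finset V =>
      if IsStableSet G (s : Set V) then s.card else 0) = alphaNum G from rfl, hα] at hA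
  by_cases hAs : IsStableSet G (A : Set V)
  · rw [if_pos hAs] at hA
    -- A is a maximum stable set, |A| = S.card + 1
    have hAK1 : (A ∩ K).card ≤ 1 := by
      rw [Finset.card_le_one]
      intro a ha b hb
      by_contra hne
      exact hAs (Finset.mem_inter.mp ha).1 (Finset.mem_inter.mp hb).1 hne
        (hclique (Finset.mem_inter.mp ha).2 (Finset.mem_inter.mp hb).2 hne)
    have hAunion : (A ∩ K) ∪ (A ∩ S) = A := by
      rw [← Finset.inter_union_distrib_left, huniv, Finset.inter_univ]
    have hdisj' : Disjoint (A ∩ K) (A ∩ S) :=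
      hdisj.mono Finset.inter_subset_right Finset.inter_subset_right
    have hsum : (A ∩ K).card + (A ∩ S).card = A.card := by
      rw [← Finset.card_union_of_disjoint hdisj', hAunion]
    have hAS : (A ∩ S).card ≤ S.card := Finset.card_le_card Finset.inter_subset_right
    have hK1 : (A ∩ K).card = 1 := by omega
    have hS1 : (A ∩ S).card = S.card := by omega
    have hASeq : A ∩ S = S :=
      Finset.eq_of_subset_of_card_le Finset.inter_subset_right (le_of_eq hS1.symm)
    obtain ⟨a, ha⟩ := Finset.card_eq_one.mp hK1
    have haK : a ∈ K := (Finset.mem_inter.mp (ha ▸ Finset.mem_singleton_self a)).2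
    refine ⟨a, haK, ?_⟩
    have : (insert a S : Finset V) = A := by
      rw [Finset.insert_eq, ← ha, ← hASeq, hAunion]
    rw [this]
    exact hAs
  · rw [if_neg hAs] at hA; omega
end

section
/- A split graph G is unbalanced if and only if it has a swing vertex, i.e., there exists a KS-partition of G together with either a vertex s ∈ S such that K ∪ {s} is a clique, or a vertex k ∈ K such that S ∪ {k} is a stable set. -/
open SimpleGraph
attribute [local instance] Classical.propDecidable

variable {V : Type*} [Fintype V] [DecidableEq V]

/-! A clique meets the stable side `S` of a KS-partition in at most one vertex, so it has at most
`|K| + 1` vertices, and one with more than `|K|` vertices consists of `K` and a vertex of `S`.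
Hence `|K| < ω` exactly when some `s ∈ S` is a swing vertex; passing to the complement graph, which
swaps the roles of `K` and `S` and of `ω` and `α`, `|S| < α` exactly when some `k ∈ K` is one.
Since `|K| + |S| = |V|`, `|K| ≤ ω` and `|S| ≤ α` for every KS-partition, `G` is balanced iff any
single KS-partition attains both bounds. -/

omit [Fintype V] [DecidableEq V] in
theorem isStableSet_iff_isClique_compl {G : SimpleGraph V} {s : Set V} :
    IsStableSet G s ↔ Gᶜ.IsClique s :=
  (isClique_compl (G := G)).symm

theorem alphaNum_eq_omegaNum_compl (G : SimpleGraph V) : alphaNum G = omegaNum Gᶜ := by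
  simp [alphaNum, omegaNum, isStableSet_iff_isClique_compl]

theorem card_le_omegaNum {G : SimpleGraph V} {s : Finset V} (hs : G.IsClique (s : Set V)) :
    s.card ≤ omegaNum G := by
  simpa [omegaNum, hs] using
    Finset.le_sup (f := fun s : Finset V => if G.IsClique (s : Set V) then s.card else 0)
      (Finset.mem_univ s)

theorem card_le_alphaNum {G : SimpleGraph V} {s : Finset V} (hs : IsStableSet G (s : Set V)) :
    s.card ≤ alphaNum G := by
  rw [alphaNum_eq_omegaNum_compl]
  exact card_le_omegaNum (isStableSet_iff_isClique_compl.mp hs)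

theorem exists_isClique_card_eq_omegaNum (G : SimpleGraph V) :
    ∃ s : Finset V, G.IsClique (s : Set V) ∧ s.card = omegaNum G := by
  obtain ⟨s, -, hs⟩ := Finset.exists_mem_eq_sup Finset.univ Finset.univ_nonempty
    fun s : Finset V => if G.IsClique (s : Set V) then s.card else 0
  by_cases hclique : G.IsClique (s : Set V)
  · exact ⟨s, hclique, by rw [omegaNum, hs, if_pos hclique]⟩
  · exact ⟨∅, by simp, by rw [omegaNum, hs, if_neg hclique, Finset.card_empty]⟩

namespace IsKSPartition

variable {G : SimpleGraph V} {K S : Finset V}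

theorem compl (h : IsKSPartition G K S) : IsKSPartition Gᶜ S K :=
  ⟨h.1.symm, by rw [Finset.union_comm, h.2.1], isStableSet_iff_isClique_compl.mp h.2.2.2,
    isStableSet_iff_isClique_compl.mpr (by rw [compl_compl]; exact h.2.2.1)⟩

theorem card_add_card (h : IsKSPartition G K S) : K.card + S.card = Fintype.card V := by
  rw [← Finset.card_union_of_disjoint h.1, h.2.1, Finset.card_univ]

theorem card_le_omegaNum (h : IsKSPartition G K S) : K.card ≤ omegaNum G :=
  _root_.card_le_omegaNum h.2.2.1

theorem card_le_alphaNum (h : IsKSPartition G K S) : S.card ≤ alphaNum G :=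
  _root_.card_le_alphaNum h.2.2.2

theorem card_inter_le_one_of_isClique (h : IsKSPartition G K S) {C : Finset V}
    (hC : G.IsClique (C : Set V)) : (C ∩ S).card ≤ 1 :=
  Finset.card_le_one.mpr fun a ha b hb => by
    by_contra hab
    rw [Finset.mem_inter] at ha hb
    exact h.2.2.2 ha.2 hb.2 hab (hC ha.1 hb.1 hab)

theorem exists_isClique_insert_of_card_lt (h : IsKSPartition G K S) {C : Finset V}
    (hC : G.IsClique (C : Set V)) (hlt : K.card < C.card) :
    ∃ s ∈ S, G.IsClique ((insert s K : Finset V) : Set V) := by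
  have hcover : C ∩ K ∪ C ∩ S = C := by
    rw [← Finset.inter_union_distrib_left, h.2.1, Finset.inter_univ]
  have hcard : C.card ≤ (C ∩ K).card + (C ∩ S).card :=
    (Finset.card_le_card hcover.ge).trans (Finset.card_union_le _ _)
  have hCK : (C ∩ K).card ≤ K.card := Finset.card_le_card Finset.inter_subset_right
  have hCS := h.card_inter_le_one_of_isClique hC
  have hKC : K ⊆ C := Finset.inter_eq_right.mp <|
    Finset.eq_of_subset_of_card_le Finset.inter_subset_right (by omega)
  obtain ⟨s, hs⟩ : (C ∩ S).Nonempty := Finset.card_pos.mp (by omega)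
  rw [Finset.mem_inter] at hs
  exact ⟨s, hs.2, hC.subset (Finset.coe_subset.mpr (Finset.insert_subset hs.1 hKC))⟩

theorem card_lt_omegaNum_iff (h : IsKSPartition G K S) :
    K.card < omegaNum G ↔ ∃ s ∈ S, G.IsClique ((insert s K : Finset V) : Set V) := by
  constructor
  · intro hlt
    obtain ⟨C, hC, hCcard⟩ := exists_isClique_card_eq_omegaNum G
    exact h.exists_isClique_insert_of_card_lt hC (hCcard ▸ hlt)
  · rintro ⟨s, hs, hclique⟩
    have hsK : s ∉ K := Finset.disjoint_right.mp h.1 hs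
    have hle := _root_.card_le_omegaNum hclique
    rw [Finset.card_insert_of_notMem hsK] at hle
    omega

theorem card_lt_alphaNum_iff (h : IsKSPartition G K S) :
    S.card < alphaNum G ↔ ∃ k ∈ K, IsStableSet G ((insert k S : Finset V) : Set V) := by
  simp only [alphaNum_eq_omegaNum_compl, h.compl.card_lt_omegaNum_iff,
    isStableSet_iff_isClique_compl]

theorem isBalanced_iff (h : IsKSPartition G K S) :
    IsBalanced G ↔ K.card = omegaNum G ∧ S.card = alphaNum G := by
  refine ⟨fun ⟨K', S', h', hK', hS'⟩ => ?_, fun hKS => ⟨K, S, h, hKS⟩⟩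
  have := h.card_add_card
  have := h'.card_add_card
  have := h.card_le_omegaNum
  have := h.card_le_alphaNum
  omega

end IsKSPartition

/-- A split graph is unbalanced iff it has a KS-partition with a swing vertex:
either s ∈ S with K ∪ {s} a clique, or k ∈ K with S ∪ {k} stable. -/
theorem unbalanced_iff_swing (G : SimpleGraph V) (hG : IsSplit G) :
    ¬ IsBalanced G ↔
      ∃ K S : Finset V, IsKSPartition G K S ∧
        ((∃ s ∈ S, G.IsClique ((insert s K : Finset V) : Set V)) ∨
         (∃ k ∈ K, IsStableSet G ((insert k S : Finset V) : Set V))) := by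
  obtain ⟨K, S, h⟩ := hG
  constructor
  · intro hunbalanced
    refine ⟨K, S, h, ?_⟩
    rw [← h.card_lt_omegaNum_iff, ← h.card_lt_alphaNum_iff]
    rw [h.isBalanced_iff] at hunbalanced
    have := h.card_le_omegaNum
    have := h.card_le_alphaNum
    omega
  · rintro ⟨K', S', h', hswing⟩
    rw [← h'.card_lt_omegaNum_iff, ← h'.card_lt_alphaNum_iff] at hswing
    rw [h'.isBalanced_iff]
    omega
end

section
/- For every minimal set cover C of a finite set V, one can construct a split graph G on vertex set V with an S-max KS-partition, where S is a choice of one loyal vertex from each set of C, K = V − S, and uv is an edge iff u and v lie together in some set of C or both lie in K; conversely, from any split graph G with S-max KS-partition, the collection {N(s) ∪ {s} : s ∈ S} is a minimal set cover of V(G). These constructions are mutually inverse, giving a bijection between (isomorphism classes of) split graphs on n vertices and (isomorphism classes of) minimal set covers of an n-set. -/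
open SimpleGraph
attribute [local instance] Classical.propDecidable

variable {V : Type*} [Fintype V] [DecidableEq V]

/-- `C` is a set cover of the finite type `V`: the union of its members is all of `V`. -/
def IsSetCover {V : Type*} [Fintype V] (C : Finset (Finset V)) : Prop :=
  ∀ v : V, ∃ A ∈ C, v ∈ A

/-- A set cover is minimal if no member is contained in the union of the remaining members. -/
def IsMinimalCover {V : Type*} [DecidableEq V] (C : Finset (Finset V)) : Prop :=
  ∀ A ∈ C, ¬ A ⊆ (C.erase A).sup id

/-- A vertex is loyal if it belongs to exactly one member of `C`. -/
def Loyal {V : Type*} (C : Finset (Finset V)) (v : V) : Prop :=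
  ∃! A : Finset V, A ∈ C ∧ v ∈ A

/-- Isomorphism of split graphs on `Fin n`. -/
def SplitIsoRel (n : ℕ) (G H : {G : SimpleGraph (Fin n) // IsSplit G}) : Prop :=
  Nonempty (G.1 ≃g H.1)

/-- Isomorphism of minimal set covers on `Fin n`: a permutation of the ground set
carrying one collection onto the other. -/
def CoverIsoRel (n : ℕ)
    (C D : {C : Finset (Finset (Fin n)) // IsSetCover C ∧ IsMinimalCover C}) : Prop :=
  ∃ σ : Equiv.Perm (Fin n), C.1.image (fun A => A.image σ) = D.1

/-!
A minimal cover has a loyal vertex in every member. Choosing one per member gives a stable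
set `S`; making its complement a clique and joining vertices that share a member yields a split
graph in which the closed neighbourhood of each `s ∈ S` is the member it represents. Conversely,
for an S-max partition, a vertex outside all closed neighbourhoods `N[s]` would enlarge `S`, so
they cover, and stability of `S` makes each `s` loyal to `N[s]`.

On isomorphism classes the choices do not matter. Two S-max stable sets differ in at most one
vertex, and the two differing vertices are twins, so their transposition is an automorphism
carrying one set to the other. Two transversals of a cover are connected by exchanging loyal
vertices of a common member, which lie in the same members, and each exchange induces an
isomorphism of the constructed graphs.
-/

section Alpha

variable {α : Type*} [Fintype α] {G : SimpleGraph α}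

theorem alphaNum_eq_indepNum (G : SimpleGraph α) : alphaNum G = G.indepNum := by
  refine le_antisymm (Finset.sup_le fun T _ => ?_) ?_
  · split_ifs with hT
    · exact IsIndepSet.card_le_indepNum hT
    · exact Nat.zero_le _
  · obtain ⟨T, hT⟩ := G.exists_isNIndepSet_indepNum
    have hT' : IsStableSet G (T : Set α) := hT.isIndepSet
    calc G.indepNum = if IsStableSet G (T : Set α) then T.card else 0 := by
          rw [if_pos hT', hT.card_eq]
      _ ≤ alphaNum G :=
        Finset.le_sup (f := fun s : Finset α => if IsStableSet G (s : Set α) then s.card else 0)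
          (Finset.mem_univ T)

theorem IsStableSet.card_le_alphaNum {T : Finset α} (hT : IsStableSet G (T : Set α)) :
    T.card ≤ alphaNum G :=
  alphaNum_eq_indepNum G ▸ IsIndepSet.card_le_indepNum hT

theorem exists_isStableSet_card_eq_alphaNum (G : SimpleGraph α) :
    ∃ T : Finset α, IsStableSet G (T : Set α) ∧ T.card = alphaNum G := by
  obtain ⟨T, hT⟩ := G.exists_isNIndepSet_indepNum
  exact ⟨T, hT.isIndepSet, hT.card_eq.trans (alphaNum_eq_indepNum G).symm⟩

end Alpha

theorem IsStableSet.card_inter_le_one {α : Type*} [DecidableEq α] {G : SimpleGraph α}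
    {T K : Finset α} (hT : IsStableSet G (T : Set α)) (hK : G.IsClique (K : Set α)) :
    (T ∩ K).card ≤ 1 := by
  refine Finset.card_le_one.2 fun a ha b hb => by_contra fun hab => ?_
  simp only [Finset.mem_inter] at ha hb
  exact hT ha.1 hb.1 hab (hK ha.2 hb.2 hab)

def twinSwap {α : Type*} [DecidableEq α] {G : SimpleGraph α} {a b : α}
    (h : ∀ w, w ≠ a → w ≠ b → (G.Adj a w ↔ G.Adj b w)) : G ≃g G where
  toEquiv := Equiv.swap a b
  map_rel_iff' {u v} := by
    have hu := h u
    have hv := h v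
    simp only [Equiv.swap_apply_def]
    split_ifs <;> subst_vars <;> grind [G.adj_comm, G.irrefl]

theorem Finset.mem_image_equiv {α β : Type*} [DecidableEq β] {s : Finset α} {σ : α ≃ β}
    {b : β} : b ∈ s.image σ ↔ σ.symm b ∈ s := by
  rw [← Equiv.coe_toEmbedding, ← Finset.map_eq_image, Finset.mem_map_equiv]

theorem Finset.image_swap_eq_of_sdiff_eq_singleton {α : Type*} [DecidableEq α] {S S' : Finset α}
    {s s' : α} (hs : S \ S' = {s}) (hs' : S' \ S = {s'}) : S.image (Equiv.swap s s') = S' := by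
  ext v
  simp only [Finset.ext_iff, Finset.mem_sdiff, Finset.mem_singleton] at hs hs'
  rw [Finset.mem_image_equiv, Equiv.symm_swap]
  grind

def IsSMax {α : Type*} [Fintype α] [DecidableEq α] (G : SimpleGraph α) (S : Finset α) : Prop :=
  IsKSPartition G (Finset.univ \ S) S ∧ S.card = alphaNum G

section KSPartition

variable {α : Type*} [Fintype α] [DecidableEq α] {G : SimpleGraph α} {S S' : Finset α}

theorem IsKSPartition.eq_sdiff {K : Finset α} (h : IsKSPartition G K S) : K = Finset.univ \ S := by
  rw [← h.2.1, Finset.union_sdiff_right, h.1.sdiff_eq_left]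

theorem IsKSPartition.card_sdiff_le_one (h : IsKSPartition G (Finset.univ \ S) S) {T : Finset α}
    (hT : IsStableSet G (T : Set α)) : (T \ S).card ≤ 1 := by
  simpa [← Finset.inter_sdiff_assoc] using hT.card_inter_le_one h.2.2.1

theorem IsKSPartition.adj_iff_of_sdiff_eq_singleton {s s' : α}
    (h : IsKSPartition G (Finset.univ \ S) S) (h' : IsKSPartition G (Finset.univ \ S') S')
    (hs : S \ S' = {s}) (hs' : S' \ S = {s'}) (w : α) (hws : w ≠ s) (hws' : w ≠ s') :
    G.Adj s w ↔ G.Adj s' w := by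
  simp only [Finset.ext_iff, Finset.mem_sdiff, Finset.mem_singleton] at hs hs'
  have hsS := (hs s).2 rfl
  have hsS' := (hs' s').2 rfl
  by_cases hw : w ∈ S
  · have hw' : w ∈ S' := by grind
    exact iff_of_false (h.2.2.2 hsS.1 hw hws.symm) (h'.2.2.2 hsS'.1 hw' hws'.symm)
  · have hw' : w ∉ S' := by grind
    exact iff_of_true (h'.2.2.1 (by simp [hsS.2]) (by simp [hw']) hws.symm)
      (h.2.2.1 (by simp [hsS'.2]) (by simp [hw]) hws'.symm)

theorem IsSplit.exists_isSMax (h : IsSplit G) : ∃ S, IsSMax G S := by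
  obtain ⟨K, S, hKS⟩ := h
  rw [hKS.eq_sdiff] at hKS
  obtain ⟨T, hT, hTcard⟩ := exists_isStableSet_card_eq_alphaNum G
  rcases le_or_gt T.card S.card with hle | hlt
  · exact ⟨S, hKS, le_antisymm hKS.2.2.2.card_le_alphaNum (hTcard ▸ hle)⟩
  -- a maximum stable set has at most one vertex in the clique `univ \ S`, so it contains `S`
  have hST : S ⊆ T := by
    have hTS := hKS.card_sdiff_le_one hT
    have hT_split := Finset.card_sdiff_add_card_inter T S
    have hS_split := Finset.card_sdiff_add_card_inter S T
    rw [Finset.inter_comm] at hS_split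
    rw [← Finset.sdiff_eq_empty_iff_subset, ← Finset.card_eq_zero]
    omega
  refine ⟨T, ⟨Finset.sdiff_disjoint, Finset.sdiff_union_of_subset (Finset.subset_univ T),
    hKS.2.2.1.subset ?_, hT⟩, hTcard⟩
  exact_mod_cast Finset.sdiff_subset_sdiff le_rfl hST

theorem IsSMax.exists_iso_image_eq (hS : IsSMax G S) (hS' : IsSMax G S') :
    ∃ φ : G ≃g G, S.image φ = S' := by
  by_cases heq : S = S'
  · exact ⟨Iso.refl, by ext; simp [heq]⟩
  have hle := hS'.1.card_sdiff_le_one hS.1.2.2.2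
  have hcard : S.card = S'.card := hS.2.trans hS'.2.symm
  have hne : (S \ S').card ≠ 0 := fun h0 => heq <| Finset.eq_of_subset_of_card_le
    (Finset.sdiff_eq_empty_iff_subset.1 (Finset.card_eq_zero.1 h0)) hcard.ge
  have hS_split := Finset.card_sdiff_add_card_inter S S'
  have hS'_split := Finset.card_sdiff_add_card_inter S' S
  rw [Finset.inter_comm] at hS'_split
  obtain ⟨s, hs⟩ := Finset.card_eq_one.1 (by omega : (S \ S').card = 1)
  obtain ⟨s', hs'⟩ := Finset.card_eq_one.1 (by omega : (S' \ S).card = 1)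
  exact ⟨twinSwap (hS.1.adj_iff_of_sdiff_eq_singleton hS'.1 hs hs'),
    Finset.image_swap_eq_of_sdiff_eq_singleton hs hs'⟩

end KSPartition

section Iso

variable {α β : Type*} {G : SimpleGraph α} {H : SimpleGraph β}

theorem IsStableSet.image_iso [DecidableEq β] (φ : G ≃g H) {T : Finset α}
    (hT : IsStableSet G (T : Set α)) : IsStableSet H ((T.image φ : Finset β) : Set β) := by
  rw [Finset.coe_image]
  rintro _ ⟨a, ha, rfl⟩ _ ⟨b, hb, rfl⟩ hab hadj
  exact hT ha hb (ne_of_apply_ne φ hab) (φ.map_adj_iff.1 hadj)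

theorem alphaNum_le_of_iso [Fintype α] [Fintype β] [DecidableEq β] (φ : G ≃g H) :
    alphaNum G ≤ alphaNum H := by
  obtain ⟨T, hT, hcard⟩ := exists_isStableSet_card_eq_alphaNum G
  rw [← hcard, ← Finset.card_image_of_injective T φ.injective]
  exact (hT.image_iso φ).card_le_alphaNum

theorem SimpleGraph.Iso.alphaNum_eq [Fintype α] [DecidableEq α] [Fintype β] [DecidableEq β]
    (φ : G ≃g H) : alphaNum G = alphaNum H :=
  (alphaNum_le_of_iso φ).antisymm (alphaNum_le_of_iso φ.symm)

variable [Fintype α] [DecidableEq α] [Fintype β] [DecidableEq β]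

theorem IsKSPartition.image_iso (φ : G ≃g H) {K S : Finset α} (h : IsKSPartition G K S) :
    IsKSPartition H (K.image φ) (S.image φ) := by
  obtain ⟨hdisj, hunion, hK, hS⟩ := h
  refine ⟨(Finset.disjoint_image φ.injective).2 hdisj, ?_, ?_, hS.image_iso φ⟩
  · rw [← Finset.image_union, hunion, Finset.image_univ_of_surjective φ.surjective]
  · rw [Finset.coe_image]
    rintro _ ⟨a, ha, rfl⟩ _ ⟨b, hb, rfl⟩ hab
    exact φ.map_adj_iff.2 (hK ha hb (ne_of_apply_ne φ hab))

theorem IsSMax.image_iso (φ : G ≃g H) {S : Finset α} (h : IsSMax G S) :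
    IsSMax H (S.image φ) := by
  have hKS := h.1.image_iso φ
  rw [hKS.eq_sdiff] at hKS
  exact ⟨hKS, by rw [Finset.card_image_of_injective S φ.injective, h.2, φ.alphaNum_eq]⟩

end Iso

noncomputable def closedNbhd {α : Type*} [Fintype α] [DecidableEq α] (G : SimpleGraph α)
    (s : α) : Finset α :=
  insert s (Finset.univ.filter fun v => G.Adj s v)

noncomputable def graphCover {α : Type*} [Fintype α] [DecidableEq α] (G : SimpleGraph α)
    (S : Finset α) : Finset (Finset α) :=
  S.image (closedNbhd G)

structure IsTransversal {α : Type*} (C : Finset (Finset α)) (S : Finset α) : Prop where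
  loyal : ∀ s ∈ S, Loyal C s
  existsUnique : ∀ A ∈ C, ∃! s, s ∈ S ∧ s ∈ A

theorem IsTransversal.isMinimalCover {α : Type*} [DecidableEq α] {C : Finset (Finset α)}
    {S : Finset α} (h : IsTransversal C S) : IsMinimalCover C := by
  intro A hA hsub
  obtain ⟨s, ⟨hsS, hsA⟩, -⟩ := h.existsUnique A hA
  obtain ⟨B, hB, hsB⟩ := Finset.mem_sup.1 (hsub hsA)
  obtain ⟨hBA, hB⟩ := Finset.mem_erase.1 hB
  exact hBA ((h.loyal s hsS).unique ⟨hB, hsB⟩ ⟨hA, hsA⟩)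

theorem exists_isTransversal {α : Type*} [DecidableEq α] {C : Finset (Finset α)}
    (hC : IsMinimalCover C) : ∃ S, IsTransversal C S := by
  have hloyal : ∀ A ∈ C, ∃ v ∈ A, ∀ B ∈ C, v ∈ B → B = A := fun A hA => by
    obtain ⟨v, hvA, hv⟩ := Finset.not_subset.1 (hC A hA)
    exact ⟨v, hvA, fun B hB hvB => by_contra fun hBA =>
      hv (Finset.mem_sup.2 ⟨B, Finset.mem_erase.2 ⟨hBA, hB⟩, hvB⟩)⟩
  choose f hfA hf using hloyal
  refine ⟨C.attach.image fun A => f A.1 A.2, ⟨?_, fun A hA => ⟨f A hA, ⟨?_, hfA A hA⟩, ?_⟩⟩⟩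
  · simp only [Finset.mem_image, Finset.mem_attach, true_and, Subtype.exists]
    rintro _ ⟨A, hA, rfl⟩
    exact ⟨A, ⟨hA, hfA A hA⟩, fun B hB => hf A hA B hB.1 hB.2⟩
  · exact Finset.mem_image.2 ⟨⟨A, hA⟩, Finset.mem_attach _ _, rfl⟩
  · simp only [Finset.mem_image, Finset.mem_attach, true_and, Subtype.exists]
    rintro _ ⟨⟨B, hB, rfl⟩, hBA⟩
    obtain rfl := hf B hB A hA hBA
    rfl

section GraphCover

variable {α : Type*} [Fintype α] [DecidableEq α] {G : SimpleGraph α} {S : Finset α}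

theorem mem_closedNbhd {s v : α} : v ∈ closedNbhd G s ↔ v = s ∨ G.Adj s v := by
  simp [closedNbhd]

theorem self_mem_closedNbhd (s : α) : s ∈ closedNbhd G s :=
  mem_closedNbhd.2 (Or.inl rfl)

theorem IsStableSet.eq_of_mem_closedNbhd (hS : IsStableSet G (S : Set α)) {s t : α} (hs : s ∈ S)
    (ht : t ∈ S) (h : t ∈ closedNbhd G s) : t = s :=
  (mem_closedNbhd.1 h).resolve_right fun hadj => hS hs ht (G.ne_of_adj hadj) hadj

theorem IsStableSet.isTransversal_graphCover (hS : IsStableSet G (S : Set α)) :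
    IsTransversal (graphCover G S) S := by
  refine ⟨fun s hs => ⟨closedNbhd G s, ⟨Finset.mem_image_of_mem _ hs, self_mem_closedNbhd s⟩, ?_⟩,
    ?_⟩
  · rintro _ ⟨hB, hsB⟩
    obtain ⟨t, ht, rfl⟩ := Finset.mem_image.1 hB
    rw [hS.eq_of_mem_closedNbhd ht hs hsB]
  · simp only [graphCover, Finset.forall_mem_image]
    exact fun s hs => ⟨s, ⟨hs, self_mem_closedNbhd s⟩,
      fun t ⟨ht, hts⟩ => hS.eq_of_mem_closedNbhd hs ht hts⟩

theorem IsStableSet.isSetCover_graphCover (hS : IsStableSet G (S : Set α))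
    (hmax : S.card = alphaNum G) : IsSetCover (graphCover G S) := by
  intro v
  by_cases hv : v ∈ S
  · exact ⟨closedNbhd G v, Finset.mem_image_of_mem _ hv, self_mem_closedNbhd v⟩
  by_contra! hcov
  have hnadj : ∀ s ∈ S, ¬ G.Adj v s := fun s hs hadj =>
    hcov _ (Finset.mem_image_of_mem _ hs) (mem_closedNbhd.2 (Or.inr hadj.symm))
  have hstable : IsStableSet G ((insert v S : Finset α) : Set α) := by
    rw [Finset.coe_insert, IsStableSet, ← isIndepSet_iff, ← isClique_compl]
    exact ((isClique_compl G).2 hS).insert fun s hs hvs =>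
      (compl_adj G v s).2 ⟨hvs, hnadj s hs⟩
  have := hstable.card_le_alphaNum
  rw [Finset.card_insert_of_notMem hv] at this
  omega

end GraphCover

def coverGraph {α : Type*} (C : Finset (Finset α)) (S : Finset α) : SimpleGraph α where
  Adj u v := u ≠ v ∧ ((∃ A ∈ C, u ∈ A ∧ v ∈ A) ∨ (u ∉ S ∧ v ∉ S))
  symm := ⟨fun _ _ ⟨hne, h⟩ => ⟨hne.symm, h.imp (fun ⟨A, hA, hu, hv⟩ => ⟨A, hA, hv, hu⟩) And.symm⟩⟩
  loopless := ⟨fun _ h => h.1 rfl⟩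

theorem coverGraph_adj {α : Type*} {C : Finset (Finset α)} {S : Finset α} {u v : α} :
    (coverGraph C S).Adj u v ↔ u ≠ v ∧ ((∃ A ∈ C, u ∈ A ∧ v ∈ A) ∨ (u ∉ S ∧ v ∉ S)) :=
  Iff.rfl

theorem IsKSPartition.coverGraph_graphCover {α : Type*} [Fintype α] [DecidableEq α]
    {G : SimpleGraph α} {S : Finset α} (h : IsKSPartition G (Finset.univ \ S) S) :
    coverGraph (graphCover G S) S = G := by
  have hK : ∀ u v, u ∉ S → v ∉ S → u ≠ v → G.Adj u v := fun u v hu hv =>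
    h.2.2.1 (by simpa using hu) (by simpa using hv)
  have hS : ∀ s ∈ S, ∀ v, G.Adj s v → v ∉ S := fun s hs v hadj hv =>
    h.2.2.2 hs hv (G.ne_of_adj hadj) hadj
  ext u v
  simp only [coverGraph_adj, graphCover, Finset.exists_mem_image, mem_closedNbhd]
  constructor
  · rintro ⟨hne, ⟨s, hs, hu | hu, hv | hv⟩ | ⟨hu, hv⟩⟩
    · exact absurd (hu.trans hv.symm) hne
    · exact hu ▸ hv
    · exact hv ▸ hu.symm
    · exact hK u v (hS s hs u hu) (hS s hs v hv) hne
    · exact hK u v hu hv hne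
  · intro hadj
    refine ⟨G.ne_of_adj hadj, ?_⟩
    by_cases hu : u ∈ S
    · exact Or.inl ⟨u, hu, Or.inl rfl, Or.inr hadj⟩
    by_cases hv : v ∈ S
    · exact Or.inl ⟨v, hv, Or.inr hadj.symm, Or.inl rfl⟩
    exact Or.inr ⟨hu, hv⟩

def coverGraphIsoOfEquiv {α β : Type*} [DecidableEq β] (σ : α ≃ β) (C : Finset (Finset α))
    (S : Finset α) : coverGraph C S ≃g coverGraph (C.image (·.image σ)) (S.image σ) where
  toEquiv := σ
  map_rel_iff' {u v} := by
    simp [coverGraph_adj, σ.injective.mem_finset_image, σ.injective.eq_iff]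

theorem Finset.image_image_eq_self_of_forall_mem_iff {α : Type*} [DecidableEq α]
    {C : Finset (Finset α)} {σ : Equiv.Perm α} (hσ : ∀ A ∈ C, ∀ v, σ v ∈ A ↔ v ∈ A) :
    C.image (·.image σ) = C := by
  conv_rhs => rw [← C.image_id]
  refine Finset.image_congr fun A hA => Finset.ext fun v => ?_
  rw [Finset.mem_image_equiv, ← hσ A hA, Equiv.apply_symm_apply]
  rfl

namespace IsTransversal

variable {α : Type*} {C : Finset (Finset α)} {S S₁ S₂ : Finset α}

theorem isStableSet_coverGraph (h : IsTransversal C S) :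
    IsStableSet (coverGraph C S) (S : Set α) := by
  rintro u hu v hv hne ⟨-, ⟨A, hA, huA, hvA⟩ | ⟨hu', -⟩⟩
  · exact hne ((h.existsUnique A hA).unique ⟨hu, huA⟩ ⟨hv, hvA⟩)
  · exact hu' hu

theorem isKSPartition_coverGraph [Fintype α] [DecidableEq α] (h : IsTransversal C S) :
    IsKSPartition (coverGraph C S) (Finset.univ \ S) S := by
  refine ⟨Finset.sdiff_disjoint, Finset.sdiff_union_of_subset (Finset.subset_univ S), ?_,
    h.isStableSet_coverGraph⟩
  intro u hu v hv hne
  simp only [Finset.coe_sdiff, Finset.coe_univ, Set.mem_sdiff, Finset.mem_coe] at hu hv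
  exact ⟨hne, Or.inr ⟨hu.2, hv.2⟩⟩

-- send each vertex of a stable set to the vertex of `S` in a member containing it;
-- loyalty of the vertices of `S` makes this injective
theorem isSMax_coverGraph [Fintype α] [DecidableEq α] (hC : IsSetCover C)
    (h : IsTransversal C S) : IsSMax (coverGraph C S) S := by
  refine ⟨h.isKSPartition_coverGraph, h.isStableSet_coverGraph.card_le_alphaNum.antisymm ?_⟩
  obtain ⟨T, hT, hcard⟩ := exists_isStableSet_card_eq_alphaNum (coverGraph C S)
  have hrep : ∀ v, ∃ s ∈ S, ∃ A ∈ C, v ∈ A ∧ s ∈ A := fun v => by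
    obtain ⟨A, hA, hvA⟩ := hC v
    obtain ⟨s, ⟨hs, hsA⟩, -⟩ := h.existsUnique A hA
    exact ⟨s, hs, A, hA, hvA, hsA⟩
  choose rep hrepS A hA hvA hsA using hrep
  refine hcard ▸ Finset.card_le_card_of_injOn rep (fun v _ => hrepS v) fun u hu v hv huv => ?_
  by_contra hne
  have hAuv : A u = A v :=
    (h.loyal _ (hrepS u)).unique ⟨hA u, hsA u⟩ ⟨hA v, huv ▸ hsA v⟩
  exact hT hu hv hne ⟨hne, Or.inl ⟨A u, hA u, hvA u, hAuv ▸ hvA v⟩⟩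

theorem closedNbhd_coverGraph [Fintype α] [DecidableEq α] (h : IsTransversal C S) {s : α}
    (hs : s ∈ S) {A : Finset α} (hA : A ∈ C) (hsA : s ∈ A) :
    closedNbhd (coverGraph C S) s = A := by
  ext v
  rw [mem_closedNbhd, coverGraph_adj]
  constructor
  · rintro (rfl | ⟨-, ⟨B, hB, hsB, hvB⟩ | ⟨hs', -⟩⟩)
    · exact hsA
    · rwa [(h.loyal s hs).unique ⟨hB, hsB⟩ ⟨hA, hsA⟩] at hvB
    · exact absurd hs hs'
  · intro hv
    rcases eq_or_ne v s with hvs | hvs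
    · exact Or.inl hvs
    · exact Or.inr ⟨hvs.symm, Or.inl ⟨A, hA, hsA, hv⟩⟩

theorem graphCover_coverGraph [Fintype α] [DecidableEq α] (h : IsTransversal C S) :
    graphCover (coverGraph C S) S = C := by
  ext A
  rw [graphCover, Finset.mem_image]
  constructor
  · rintro ⟨s, hs, rfl⟩
    obtain ⟨B, ⟨hB, hsB⟩, -⟩ := h.loyal s hs
    rwa [h.closedNbhd_coverGraph hs hB hsB]
  · intro hA
    obtain ⟨s, ⟨hs, hsA⟩, -⟩ := h.existsUnique A hA
    exact ⟨s, hs, h.closedNbhd_coverGraph hs hA hsA⟩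

theorem image {β : Type*} [DecidableEq β] (σ : α ≃ β) (h : IsTransversal C S) :
    IsTransversal (C.image (·.image σ)) (S.image σ) := by
  have hmem {a : α} {A : Finset α} : σ a ∈ A.image σ ↔ a ∈ A := σ.injective.mem_finset_image
  constructor
  · simp only [Finset.forall_mem_image]
    intro s hs
    obtain ⟨A, ⟨hA, hsA⟩, hAu⟩ := h.loyal s hs
    refine ⟨A.image σ, ⟨Finset.mem_image_of_mem _ hA, hmem.2 hsA⟩, ?_⟩
    rintro _ ⟨hB', hsB⟩
    obtain ⟨B, hB, rfl⟩ := Finset.mem_image.1 hB'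
    rw [hAu B ⟨hB, hmem.1 hsB⟩]
  · simp only [Finset.forall_mem_image]
    intro A hA
    obtain ⟨t, ⟨ht, htA⟩, htu⟩ := h.existsUnique A hA
    refine ⟨σ t, ⟨Finset.mem_image_of_mem _ ht, hmem.2 htA⟩, ?_⟩
    rintro _ ⟨hu', huA⟩
    obtain ⟨u, hu, rfl⟩ := Finset.mem_image.1 hu'
    rw [htu u ⟨hu, hmem.1 huA⟩]

theorem eq_of_subset (h₁ : IsTransversal C S₁) (h₂ : IsTransversal C S₂) (hsub : S₁ ⊆ S₂) :
    S₁ = S₂ := by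
  refine hsub.antisymm fun t ht => ?_
  obtain ⟨A, ⟨hA, htA⟩, -⟩ := h₂.loyal t ht
  obtain ⟨s, ⟨hs, hsA⟩, -⟩ := h₁.existsUnique A hA
  exact (h₂.existsUnique A hA).unique ⟨hsub hs, hsA⟩ ⟨ht, htA⟩ ▸ hs

theorem exists_twin (h₁ : IsTransversal C S₁) (h₂ : IsTransversal C S₂) {s : α} (hs : s ∈ S₁)
    (hs₂ : s ∉ S₂) : ∃ s' ∈ S₂, s' ∉ S₁ ∧ ∀ B ∈ C, s ∈ B ↔ s' ∈ B := by
  obtain ⟨A, ⟨hA, hsA⟩, hAu⟩ := h₁.loyal s hs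
  obtain ⟨s', ⟨hs', hs'A⟩, -⟩ := h₂.existsUnique A hA
  obtain ⟨A', -, hA'u⟩ := h₂.loyal s' hs'
  refine ⟨s', hs', fun hs'₁ => hs₂ ((h₁.existsUnique A hA).unique ⟨hs'₁, hs'A⟩ ⟨hs, hsA⟩ ▸ hs'),
    fun B hB => ⟨fun hsB => hAu B ⟨hB, hsB⟩ ▸ hs'A, fun hs'B => ?_⟩⟩
  rwa [hA'u B ⟨hB, hs'B⟩, ← hA'u A ⟨hA, hs'A⟩]

-- exchange the vertices of `S₁ \ S₂` one at a time for their twins in `S₂`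
theorem nonempty_coverGraph_iso [DecidableEq α] (h₁ : IsTransversal C S₁)
    (h₂ : IsTransversal C S₂) : Nonempty (coverGraph C S₁ ≃g coverGraph C S₂) := by
  induction hk : (S₁ \ S₂).card using Nat.strong_induction_on generalizing S₁ with
  | _ k ih =>
  obtain hempty | ⟨s, hs⟩ := (S₁ \ S₂).eq_empty_or_nonempty
  · rw [h₁.eq_of_subset h₂ (Finset.sdiff_eq_empty_iff_subset.1 hempty)]
    exact ⟨Iso.refl⟩
  rw [Finset.mem_sdiff] at hs
  obtain ⟨s', hs', hs'₁, htwin⟩ := h₁.exists_twin h₂ hs.1 hs.2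
  have hC : C.image (·.image (Equiv.swap s s')) = C :=
    Finset.image_image_eq_self_of_forall_mem_iff fun B hB v => by
      have := htwin B hB
      rw [Equiv.swap_apply_def]
      split_ifs <;> simp_all
  have hlt : (S₁.image (Equiv.swap s s') \ S₂).card < k := by
    refine hk ▸ Finset.card_lt_card ((Finset.ssubset_iff_of_subset fun v => ?_).2 ⟨s, ?_, ?_⟩)
    all_goals simp only [Finset.mem_sdiff, Finset.mem_image_equiv, Equiv.symm_swap]
    all_goals grind
  obtain ⟨ψ⟩ := ih _ hlt (hC ▸ h₁.image (Equiv.swap s s')) rfl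
  have φ := coverGraphIsoOfEquiv (Equiv.swap s s') C S₁
  rw [hC] at φ
  exact ⟨φ.trans ψ⟩

theorem nonempty_coverGraph_iso_of_image_eq {β : Type*} [DecidableEq β]
    {D : Finset (Finset β)} {T : Finset β} (hS : IsTransversal C S) (σ : α ≃ β)
    (hσ : C.image (·.image σ) = D) (hT : IsTransversal D T) :
    Nonempty (coverGraph C S ≃g coverGraph D T) := by
  subst hσ
  obtain ⟨ψ⟩ := (hS.image σ).nonempty_coverGraph_iso hT
  exact ⟨(coverGraphIsoOfEquiv σ C S).trans ψ⟩

end IsTransversal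

section GraphCoverIso

variable {α β : Type*} [Fintype α] [DecidableEq α] [Fintype β] [DecidableEq β]
  {G : SimpleGraph α} {H : SimpleGraph β}

theorem closedNbhd_image_iso (φ : G ≃g H) (s : α) :
    (closedNbhd G s).image φ = closedNbhd H (φ s) := by
  ext v
  obtain ⟨w, rfl⟩ := φ.surjective v
  rw [φ.injective.mem_finset_image, mem_closedNbhd, mem_closedNbhd, φ.map_adj_iff,
    φ.injective.eq_iff]

theorem graphCover_image_iso (φ : G ≃g H) (S : Finset α) :
    (graphCover G S).image (·.image φ) = graphCover H (S.image φ) := by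
  simp only [graphCover, Finset.image_image]
  exact Finset.image_congr fun s _ => closedNbhd_image_iso φ s

theorem IsSMax.exists_image_graphCover_eq {S : Finset α} {T : Finset β} (hS : IsSMax G S)
    (φ : G ≃g H) (hT : IsSMax H T) :
    ∃ σ : α ≃ β, (graphCover G S).image (·.image σ) = graphCover H T := by
  obtain ⟨ψ, hψ⟩ := (hS.image_iso φ).exists_iso_image_eq hT
  refine ⟨(φ.trans ψ).toEquiv, ?_⟩
  rw [← hψ, Finset.image_image]
  exact graphCover_image_iso (φ.trans ψ) S

end GraphCoverIso

section Quotient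

variable {n : ℕ}

noncomputable def splitToCover (G : {G : SimpleGraph (Fin n) // IsSplit G}) :
    {C : Finset (Finset (Fin n)) // IsSetCover C ∧ IsMinimalCover C} :=
  have hS := G.2.exists_isSMax.choose_spec
  ⟨graphCover G.1 G.2.exists_isSMax.choose, hS.1.2.2.2.isSetCover_graphCover hS.2,
    hS.1.2.2.2.isTransversal_graphCover.isMinimalCover⟩

noncomputable def coverToSplit
    (C : {C : Finset (Finset (Fin n)) // IsSetCover C ∧ IsMinimalCover C}) :
    {G : SimpleGraph (Fin n) // IsSplit G} :=
  ⟨coverGraph C.1 (exists_isTransversal C.2.2).choose, _, _,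
    (exists_isTransversal C.2.2).choose_spec.isKSPartition_coverGraph⟩

theorem coverIsoRel_splitToCover {G H : {G : SimpleGraph (Fin n) // IsSplit G}}
    (φ : G.1 ≃g H.1) : CoverIsoRel n (splitToCover G) (splitToCover H) :=
  G.2.exists_isSMax.choose_spec.exists_image_graphCover_eq φ H.2.exists_isSMax.choose_spec

theorem splitIsoRel_coverToSplit
    {C D : {C : Finset (Finset (Fin n)) // IsSetCover C ∧ IsMinimalCover C}}
    (h : CoverIsoRel n C D) : SplitIsoRel n (coverToSplit C) (coverToSplit D) :=
  let ⟨σ, hσ⟩ := h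
  (exists_isTransversal C.2.2).choose_spec.nonempty_coverGraph_iso_of_image_eq σ hσ
    (exists_isTransversal D.2.2).choose_spec

theorem splitIsoRel_coverToSplit_splitToCover (G : {G : SimpleGraph (Fin n) // IsSplit G}) :
    SplitIsoRel n (coverToSplit (splitToCover G)) G := by
  obtain ⟨hKS, -⟩ := G.2.exists_isSMax.choose_spec
  obtain ⟨φ⟩ := (exists_isTransversal (splitToCover G).2.2).choose_spec.nonempty_coverGraph_iso
    hKS.2.2.2.isTransversal_graphCover
  have hG : coverGraph (splitToCover G).1 G.2.exists_isSMax.choose = G.1 :=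
    hKS.coverGraph_graphCover
  rw [hG] at φ
  exact ⟨φ⟩

theorem coverIsoRel_splitToCover_coverToSplit
    (C : {C : Finset (Finset (Fin n)) // IsSetCover C ∧ IsMinimalCover C}) :
    CoverIsoRel n (splitToCover (coverToSplit C)) C := by
  have hT := (exists_isTransversal C.2.2).choose_spec
  obtain ⟨σ, hσ⟩ := (coverToSplit C).2.exists_isSMax.choose_spec.exists_image_graphCover_eq
    Iso.refl (hT.isSMax_coverGraph C.2.1)
  exact ⟨σ, hσ.trans hT.graphCover_coverGraph⟩

noncomputable def splitCoverEquiv (n : ℕ) : Quot (SplitIsoRel n) ≃ Quot (CoverIsoRel n) where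
  toFun := Quot.lift (Quot.mk _ ∘ splitToCover) fun _ _ ⟨φ⟩ =>
    Quot.sound (coverIsoRel_splitToCover φ)
  invFun := Quot.lift (Quot.mk _ ∘ coverToSplit) fun _ _ h =>
    Quot.sound (splitIsoRel_coverToSplit h)
  left_inv := Quot.ind fun G => Quot.sound (splitIsoRel_coverToSplit_splitToCover G)
  right_inv := Quot.ind fun C => Quot.sound (coverIsoRel_splitToCover_coverToSplit C)

end Quotient

/-- Royle's bijection between split graphs and minimal set covers:
(1) every minimal set cover of an `n`-set gives rise to a split graph on the same
ground set with an S-max KS-partition, where `S` is a choice of one loyal vertex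
from each member, `K` is the complement, and `u v` are adjacent iff they lie together
in a member of `C` or both lie in `K`;
(2) conversely, from a split graph with an S-max KS-partition, the closed neighborhoods
of the vertices of `S` form a minimal set cover;
(3) these constructions give a bijection between isomorphism classes of split graphs
on `n` vertices and isomorphism classes of minimal set covers of an `n`-set. -/
theorem royle_bijection (n : ℕ) :
    (∀ C : Finset (Finset (Fin n)), IsSetCover C → IsMinimalCover C →
      ∃ (G : SimpleGraph (Fin n)) (K S : Finset (Fin n)),
        IsKSPartition G K S ∧ S.card = alphaNum G ∧ K = Finset.univ \ S ∧
        (∀ s ∈ S, Loyal C s) ∧ (∀ A ∈ C, ∃! s, s ∈ S ∧ s ∈ A) ∧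
        (∀ u v : Fin n, G.Adj u v ↔
          u ≠ v ∧ ((∃ A ∈ C, u ∈ A ∧ v ∈ A) ∨ (u ∈ K ∧ v ∈ K)))) ∧
    (∀ (G : SimpleGraph (Fin n)) (K S : Finset (Fin n)),
      IsKSPartition G K S → S.card = alphaNum G →
      IsSetCover (S.image fun s => insert s (Finset.univ.filter fun v => G.Adj s v)) ∧
      IsMinimalCover (S.image fun s => insert s (Finset.univ.filter fun v => G.Adj s v))) ∧
    Nonempty (Quot (SplitIsoRel n) ≃ Quot (CoverIsoRel n)) := by
  refine ⟨fun C hC hmin => ?_, fun G K S hKS hmax => ?_, ⟨splitCoverEquiv n⟩⟩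
  · obtain ⟨S, hS⟩ := exists_isTransversal hmin
    obtain ⟨hKS, hmax⟩ := hS.isSMax_coverGraph hC
    refine ⟨coverGraph C S, _, S, hKS, hmax, rfl, hS.loyal, hS.existsUnique, fun u v => ?_⟩
    simp [coverGraph_adj]
  · exact ⟨hKS.2.2.2.isSetCover_graphCover hmax, hKS.2.2.2.isTransversal_graphCover.isMinimalCover⟩
end

section
/- There is a bijection between (isomorphism classes of) split graphs on n vertices and (isomorphism classes of) XY-graphs on n vertices in which no vertex of Y is isolated, given by taking an S-max KS-partition, setting X = S, Y = K, and deleting all edges within K; the inverse adds back all edges within Y. -/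
open SimpleGraph
attribute [local instance] Classical.propDecidable

variable {V : Type*} [Fintype V] [DecidableEq V]

/-- An XY-graph on `Fin n`: a bipartite graph with a specified bipartition, whose
distinguished part is `X` (the other part `Y` being the complement of `X`). -/
structure XYGraph (n : ℕ) where
  G : SimpleGraph (Fin n)
  X : Finset (Fin n)
  bip : ∀ u v : Fin n, G.Adj u v → (u ∈ X ∧ v ∉ X) ∨ (u ∉ X ∧ v ∈ X)

/-- No vertex of `Y` (the complement of `X`) is isolated. -/
def NoIsolateY {n : ℕ} (A : XYGraph n) : Prop :=
  ∀ v : Fin n, v ∉ A.X → ∃ u ∈ A.X, A.G.Adj u v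

/-- `X` contains a universal vertex: one adjacent to every vertex of `Y`. -/
def HasUniversalX {n : ℕ} (A : XYGraph n) : Prop :=
  ∃ x ∈ A.X, ∀ y : Fin n, y ∉ A.X → A.G.Adj x y

/-- Isomorphism of XY-graphs with no isolates in Y. -/
def XYnRel (n : ℕ) (A B : {A : XYGraph n // NoIsolateY A}) : Prop :=
  ∃ e : A.1.G ≃g B.1.G, ∀ v : Fin n, v ∈ A.1.X ↔ e v ∈ B.1.X

/-!
Adding all edges inside `Y` turns an XY-graph into a split graph with KS-partition `(Y, X)`, and
deleting the edges inside the clique of a KS-partition undoes this. The KS-partitions coming from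
XY-graphs without isolates in `Y` are those in which every clique vertex has a neighbour in the
stable part. Every split graph has one (take `S` of maximum size), and two of them, `S` and `T`,
differ by a single exchange `a ∈ S \ T`, `b ∈ T \ S`; then `a` and `b` have the same neighbours
outside `{a, b}`, so swapping them is an automorphism carrying `S` to `T`. Hence isomorphic
completions come from isomorphic XY-graphs.
-/

namespace SimpleGraph

variable {α β : Type*}

def completeOn (s : Set α) : SimpleGraph α where
  Adj u v := u ≠ v ∧ u ∈ s ∧ v ∈ s
  symm := ⟨fun _ _ ⟨h, hu, hv⟩ => ⟨h.symm, hv, hu⟩⟩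
  loopless := ⟨fun _ h => h.1 rfl⟩

@[simp]
lemma completeOn_adj {s : Set α} {u v : α} : (completeOn s).Adj u v ↔ u ≠ v ∧ u ∈ s ∧ v ∈ s :=
  Iff.rfl

variable {G : SimpleGraph α} {H : SimpleGraph β} {s : Set α} {t : Set β}

def Iso.betweenCompl (e : G ≃g H) (he : ∀ v, v ∈ s ↔ e v ∈ t) :
    G.between s sᶜ ≃g H.between t tᶜ where
  toEquiv := e.toEquiv
  map_rel_iff' := by simp [between_adj, he, e.map_adj_iff]

def Iso.supCompleteOn (e : G ≃g H) (he : ∀ v, v ∈ s ↔ e v ∈ t) :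
    G ⊔ completeOn s ≃g H ⊔ completeOn t where
  toEquiv := e.toEquiv
  map_rel_iff' := by simp [he, e.map_adj_iff]

def Iso.swap [DecidableEq α] {a b : α} (h : ∀ v, v ≠ a → v ≠ b → (G.Adj a v ↔ G.Adj b v)) :
    G ≃g G where
  toEquiv := Equiv.swap a b
  map_rel_iff' := by
    intro u v
    simp only [Equiv.swap_apply_def]
    split_ifs <;> grind [adj_comm, Adj.ne]

end SimpleGraph

section KSPartition

variable {W : Type*} [Fintype W] [DecidableEq W] {G : SimpleGraph V} {H : SimpleGraph W}
  {K S T : Finset V}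

lemma IsStableSet.subsingleton_inter_of_isClique {α : Type*} {G : SimpleGraph α} {s t : Set α}
    (hs : IsStableSet G s) (ht : G.IsClique t) : (s ∩ t).Subsingleton := fun _ hx _ hy =>
  by_contra fun hne => hs hx.1 hy.1 hne (ht hx.2 hy.2 hne)

lemma IsKSPartition.eq_compl (h : IsKSPartition G K S) : K = Sᶜ :=
  eq_compl_iff_isCompl.mpr ⟨h.1, codisjoint_iff.mpr h.2.1⟩

lemma isKSPartition_compl_iff :
    IsKSPartition G Sᶜ S ↔ G.IsClique (↑Sᶜ : Set V) ∧ IsStableSet G (S : Set V) :=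
  ⟨fun h => h.2.2, fun h => ⟨disjoint_compl_left, compl_sup_eq_top, h⟩⟩

lemma IsKSPartition.insert (h : IsKSPartition G Sᶜ S) {v : V} (hv : ∀ u ∈ S, ¬ G.Adj u v) :
    IsKSPartition G (insert v S)ᶜ (insert v S) := by
  rw [isKSPartition_compl_iff] at h ⊢
  refine ⟨h.1.subset (by simp), ?_⟩
  rw [Finset.coe_insert]
  exact h.2.insert fun u hu _ => ⟨fun huv => hv u hu huv.symm, hv u hu⟩

-- Exactly the S-max KS-partitions: a stable set meets the clique `Sᶜ` in at most one vertex.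
def IsDominatingKSPartition (G : SimpleGraph V) (S : Finset V) : Prop :=
  IsKSPartition G Sᶜ S ∧ ∀ v ∉ S, ∃ u ∈ S, G.Adj u v

lemma IsSplit.exists_isDominatingKSPartition (hG : IsSplit G) :
    ∃ S, IsDominatingKSPartition G S := by
  obtain ⟨K, S₀, hS₀⟩ := hG
  obtain ⟨S, hS, hmax⟩ := Finset.exists_max_image
    {S : Finset V | IsKSPartition G Sᶜ S} Finset.card ⟨S₀, by simpa [← hS₀.eq_compl]⟩
  rw [Finset.mem_filter_univ] at hS
  refine ⟨S, hS, fun v hv => ?_⟩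
  by_contra! hno
  have := hmax _ (Finset.mem_filter.mpr ⟨Finset.mem_univ _, hS.insert hno⟩)
  rw [Finset.card_insert_of_notMem hv] at this
  omega

lemma IsDominatingKSPartition.of_iso {T : Finset W} (e : G ≃g H) (he : ∀ v, v ∈ S ↔ e v ∈ T)
    (h : IsDominatingKSPartition G S) : IsDominatingKSPartition H T := by
  obtain ⟨hKS, hdom⟩ := h
  rw [isKSPartition_compl_iff] at hKS
  have hT : ∀ w, w ∈ T ↔ e.symm w ∈ S := fun w => by rw [he, e.apply_symm_apply]
  refine ⟨isKSPartition_compl_iff.mpr ⟨fun x hx y hy hxy => ?_, fun x hx y hy hxy hadj => ?_⟩,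
    fun w hw => ?_⟩
  · exact e.symm.map_adj_iff.mp <|
      hKS.1 (by simpa [hT] using hx) (by simpa [hT] using hy) (e.symm.injective.ne hxy)
  · exact hKS.2 ((hT x).mp hx) ((hT y).mp hy) (e.symm.injective.ne hxy)
      (e.symm.map_adj_iff.mpr hadj)
  · obtain ⟨u, hu, huw⟩ := hdom (e.symm w) (by rwa [← hT])
    exact ⟨e u, (he u).mp hu, by rwa [← e.apply_symm_apply w, e.map_adj_iff]⟩

lemma IsDominatingKSPartition.eq_of_subset (hS : IsDominatingKSPartition G S)
    (hT : IsDominatingKSPartition G T) (hST : S ⊆ T) : S = T := by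
  refine hST.antisymm fun v hvT => by_contra fun hvS => ?_
  obtain ⟨u, huS, huv⟩ := hS.2 v hvS
  exact hT.1.2.2.2 (Finset.mem_coe.mpr (hST huS)) hvT huv.ne huv

lemma IsDominatingKSPartition.exists_iso (hS : IsDominatingKSPartition G S)
    (hT : IsDominatingKSPartition G T) : ∃ σ : G ≃g G, ∀ v, v ∈ S ↔ σ v ∈ T := by
  by_cases hST : S = T
  · exact ⟨Iso.refl, fun v => by rw [hST]; rfl⟩
  obtain ⟨a, haS, haT⟩ := Finset.not_subset.mp fun h => hST (hS.eq_of_subset hT h)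
  obtain ⟨b, hbT, hbS⟩ := Finset.not_subset.mp fun h => hST (hT.eq_of_subset hS h).symm
  obtain ⟨⟨-, -, hSc, hSs⟩, -⟩ := hS
  obtain ⟨⟨-, -, hTc, hTs⟩, -⟩ := hT
  -- `S \ T` and `T \ S` lie in a stable set and a clique, so they are `{a}` and `{b}`.
  have hmem : ∀ v, v ≠ a → v ≠ b → (v ∈ S ↔ v ∈ T) := fun v hva hvb => by
    constructor
    · exact fun hvS => by_contra fun hvT => hva <|
        (hSs.subsingleton_inter_of_isClique hTc) ⟨hvS, by simpa⟩ ⟨haS, by simpa⟩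
    · exact fun hvT => by_contra fun hvS => hvb <|
        (hTs.subsingleton_inter_of_isClique hSc) ⟨hvT, by simpa⟩ ⟨hbT, by simpa⟩
  have htwin : ∀ v, v ≠ a → v ≠ b → (G.Adj a v ↔ G.Adj b v) := fun v hva hvb => by
    by_cases hv : v ∈ S
    · exact iff_of_false (hSs haS hv hva.symm) (hTs hbT ((hmem v hva hvb).mp hv) hvb.symm)
    · have hvT : v ∉ T := by rwa [← hmem v hva hvb]
      exact iff_of_true (hTc (by simpa) (by simpa) hva.symm) (hSc (by simpa) (by simpa) hvb.symm)
  refine ⟨Iso.swap htwin, fun v => ?_⟩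
  show v ∈ S ↔ Equiv.swap a b v ∈ T
  rcases eq_or_ne v a with rfl | hva
  · simp [haS, hbT]
  rcases eq_or_ne v b with rfl | hvb
  · simp [hbS, haT]
  rw [Equiv.swap_apply_of_ne_of_ne hva hvb, hmem v hva hvb]

end KSPartition

namespace XYGraph

variable {n : ℕ}

def completion (A : XYGraph n) : SimpleGraph (Fin n) :=
  A.G ⊔ completeOn (↑A.X)ᶜ

lemma between_completion (A : XYGraph n) : A.completion.between ↑A.X (↑A.X)ᶜ = A.G := by
  ext u v
  have := A.bip u v
  simp only [completion, between_adj, sup_adj, completeOn_adj, Set.mem_compl_iff, Finset.mem_coe]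
  tauto

lemma isKSPartition_completion (A : XYGraph n) : IsKSPartition A.completion A.Xᶜ A.X :=
  isKSPartition_compl_iff.mpr
    ⟨fun u hu v hv huv => Or.inr ⟨huv, by simpa using hu, by simpa using hv⟩,
    fun u hu v hv _ hadj => hadj.elim (fun h => (A.bip u v h).elim (·.2 hv) (·.1 hu))
      fun h => h.2.1 hu⟩

lemma isDominatingKSPartition_completion {A : XYGraph n} (hA : NoIsolateY A) :
    IsDominatingKSPartition A.completion A.X :=
  ⟨A.isKSPartition_completion, fun v hv =>
    let ⟨u, hu, huv⟩ := hA v hv; ⟨u, hu, Or.inl huv⟩⟩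

def ofPartition (G : SimpleGraph (Fin n)) (S : Finset (Fin n)) : XYGraph n where
  G := G.between ↑S (↑S)ᶜ
  X := S
  bip u v h := by simpa using h.2

lemma noIsolateY_ofPartition {G : SimpleGraph (Fin n)} {S : Finset (Fin n)}
    (h : IsDominatingKSPartition G S) : NoIsolateY (ofPartition G S) := fun v hv =>
  let ⟨u, hu, huv⟩ := h.2 v hv; ⟨u, hu, huv, Or.inl ⟨hu, hv⟩⟩

lemma completion_ofPartition {G : SimpleGraph (Fin n)} {S : Finset (Fin n)}
    (h : IsKSPartition G Sᶜ S) : (ofPartition G S).completion = G := by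
  obtain ⟨hK, hS⟩ := isKSPartition_compl_iff.mp h
  ext u v
  simp only [completion, ofPartition, sup_adj, between_adj, completeOn_adj, Set.mem_compl_iff,
    Finset.mem_coe]
  constructor
  · rintro (⟨huv, -⟩ | ⟨huv, hu, hv⟩)
    · exact huv
    · exact hK (by simpa) (by simpa) huv
  · intro huv
    by_cases hu : u ∈ S <;> by_cases hv : v ∈ S
    · exact absurd huv (hS hu hv huv.ne)
    · exact Or.inl ⟨huv, Or.inl ⟨hu, hv⟩⟩
    · exact Or.inl ⟨huv, Or.inr ⟨hu, hv⟩⟩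
    · exact Or.inr ⟨huv.ne, hu, hv⟩

end XYGraph

lemma splitIsoRel_equivalence (n : ℕ) : Equivalence (SplitIsoRel n) :=
  ⟨fun _ => ⟨Iso.refl⟩, fun ⟨e⟩ => ⟨e.symm⟩, fun ⟨e⟩ ⟨f⟩ => ⟨e.trans f⟩⟩

def completionClass (n : ℕ) : Quot (XYnRel n) → Quot (SplitIsoRel n) :=
  Quot.lift (fun A => Quot.mk _ ⟨A.1.completion, _, _, A.1.isKSPartition_completion⟩)
    fun _ _ ⟨e, he⟩ => Quot.sound ⟨e.supCompleteOn fun v => (he v).not⟩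

lemma completionClass_injective (n : ℕ) : Function.Injective (completionClass n) := by
  rintro ⟨A⟩ ⟨B⟩ h
  obtain ⟨f⟩ := (splitIsoRel_equivalence n).eqvGen_iff.mp (Quot.eq.mp h)
  let T := A.1.X.map f.toEquiv.toEmbedding
  have hT : ∀ v, v ∈ A.1.X ↔ f v ∈ T := fun v => (Finset.mem_map' _).symm
  obtain ⟨σ, hσ⟩ := ((XYGraph.isDominatingKSPartition_completion A.2).of_iso f hT).exists_iso
    (XYGraph.isDominatingKSPartition_completion B.2)
  have hfσ : ∀ v, v ∈ A.1.X ↔ (f.trans σ) v ∈ B.1.X := fun v => (hT v).trans (hσ (f v))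
  refine Quot.sound ⟨⟨(f.trans σ).toEquiv, ?_⟩, hfσ⟩
  rw [← A.1.between_completion, ← B.1.between_completion]
  exact (Iso.betweenCompl (f.trans σ) hfσ).map_rel_iff

lemma completionClass_surjective (n : ℕ) : Function.Surjective (completionClass n) := by
  rintro ⟨G, hG⟩
  obtain ⟨S, hS⟩ := hG.exists_isDominatingKSPartition
  exact ⟨Quot.mk _ ⟨_, XYGraph.noIsolateY_ofPartition hS⟩,
    congrArg (Quot.mk _) (Subtype.ext (XYGraph.completion_ofPartition hS.1))⟩

/-- There is a bijection between isomorphism classes of split graphs on `n` vertices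
and isomorphism classes of XY-graphs on `n` vertices with no isolates in `Y`. -/
theorem split_xy_bijection (n : ℕ) :
    Nonempty (Quot (SplitIsoRel n) ≃ Quot (XYnRel n)) :=
  ⟨(Equiv.ofBijective _ ⟨completionClass_injective n, completionClass_surjective n⟩).symm⟩
end

section
/- There is a bijection between (isomorphism classes of) unbalanced XY-graphs on n vertices and (isomorphism classes of) XY-graphs with no isolates in Y on t vertices for 0 ≤ t ≤ n − 1, given by deleting a universal vertex u of X together with all vertices of Y whose only neighbor is u. -/
open SimpleGraph

/-- Isomorphism of unbalanced XY-graphs on `Fin n` (no isolates in `Y`, and a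
universal vertex in `X`). -/
def UXYRel (n : ℕ)
    (A B : {A : XYGraph n // NoIsolateY A ∧ HasUniversalX A}) : Prop :=
  ∃ e : A.1.G ≃g B.1.G, ∀ v : Fin n, v ∈ A.1.X ↔ e v ∈ B.1.X

/-- Isomorphism of XY-graphs with no isolates in `Y` on ground sets of size
`t ≤ n − 1`. -/
def SmallXYRel (n : ℕ)
    (A B : Σ t : Fin n, {A : XYGraph t.val // NoIsolateY A}) : Prop :=
  ∃ e : A.2.1.G ≃g B.2.1.G, ∀ v : Fin A.1.val, v ∈ A.2.1.X ↔ e v ∈ B.2.1.X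

/-!
Let `u` be a universal vertex of `X`. Every edge either joins two vertices that survive the
deletion of `u` and of its private neighbours in `Y`, or joins `u` to a vertex of `Y`, and every
deleted vertex other than `u` lies in `Y`. So an unbalanced XY-graph on `n` vertices is recovered
up to isomorphism from its deletion: two of them are isomorphic exactly when their deletions are.
The choice of `u` does not matter, because the transposition of two universal vertices is an
automorphism. Conversely, an XY-graph with no isolates in `Y` on `t < n` vertices is the deletion
of its cone, obtained by adding a universal vertex and `n - t - 1` vertices of `Y` pendant at it.
-/

theorem Quot.map_bijective {α β : Type*} {r : α → α → Prop} {s : β → β → Prop}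
    (hs : Equivalence s) {f : α → β} (hf : ∀ ⦃a b⦄, r a b → s (f a) (f b))
    (hreflect : ∀ ⦃a b⦄, s (f a) (f b) → r a b) (hsurj : ∀ b, ∃ a, s (f a) b) :
    (Quot.map f hf).Bijective := by
  refine ⟨fun a b hab => ?_, fun b => ?_⟩
  · induction a using Quot.ind
    induction b using Quot.ind
    exact Quot.sound (hreflect (hs.eqvGen_iff.mp (Quot.eqvGen_exact (r := s) hab)))
  · induction b using Quot.ind with | mk b => ?_
    obtain ⟨a, ha⟩ := hsurj b
    exact ⟨Quot.mk r a, Quot.sound ha⟩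

theorem Equiv.Perm.exists_extending_pair_of_notMem_range {ι β : Type*} [Finite ι]
    {f g : ι → β} (hf : f.Injective) (hg : g.Injective) {u v : β}
    (hu : u ∉ Set.range f) (hv : v ∉ Set.range g) :
    ∃ σ : Equiv.Perm β, σ u = v ∧ ∀ i, σ (f i) = g i := by
  have hinj : ∀ {h : ι → β} {w : β}, h.Injective → w ∉ Set.range h →
      Function.Injective fun o : Option ι => o.elim w h := by
    rintro h w hh hw (_ | a) (_ | b) hab
    · rfl
    · exact (hw ⟨b, hab.symm⟩).elim
    · exact (hw ⟨a, hab⟩).elim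
    · exact congrArg some (hh hab)
  obtain ⟨σ, hσ⟩ := Equiv.Perm.exists_extending_pair _ _ (hinj hf hu) (hinj hg hv)
  exact ⟨σ, hσ none, fun i => hσ (some i)⟩

noncomputable def Set.finEmb {α : Type*} (S : Set α) [Finite S] : Fin (Nat.card S) ↪ α :=
  (Finite.equivFin S).symm.toEmbedding.trans (Function.Embedding.subtype _)

theorem Set.finEmb_mem {α : Type*} (S : Set α) [Finite S] (i : Fin (Nat.card S)) :
    finEmb S i ∈ S :=
  ((Finite.equivFin S).symm i).2

@[simp]
theorem Set.range_finEmb {α : Type*} (S : Set α) [Finite S] : Set.range (finEmb S) = S := by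
  ext x
  refine ⟨?_, fun hx => ⟨Finite.equivFin S ⟨x, hx⟩, ?_⟩⟩
  · rintro ⟨i, rfl⟩
    exact finEmb_mem S i
  · show ((Finite.equivFin S).symm (Finite.equivFin S ⟨x, hx⟩) : α) = x
    rw [Equiv.symm_apply_apply]

namespace XYGraph

open Set

variable {k m n : ℕ}

def Isomorphic (A : XYGraph m) (B : XYGraph n) : Prop :=
  ∃ e : A.G ≃g B.G, ∀ v, v ∈ A.X ↔ e v ∈ B.X

namespace Isomorphic

theorem of_equiv {A : XYGraph m} {B : XYGraph n} (σ : Fin m ≃ Fin n)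
    (hadj : ∀ x y, B.G.Adj (σ x) (σ y) ↔ A.G.Adj x y) (hX : ∀ x, σ x ∈ B.X ↔ x ∈ A.X) :
    A.Isomorphic B :=
  ⟨⟨σ, hadj _ _⟩, fun x => (hX x).symm⟩

theorem refl (A : XYGraph n) : A.Isomorphic A :=
  ⟨Iso.refl, fun _ => Iff.rfl⟩

theorem symm {A : XYGraph m} {B : XYGraph n} (h : A.Isomorphic B) : B.Isomorphic A := by
  obtain ⟨e, he⟩ := h
  exact ⟨e.symm, fun v => by rw [he, RelIso.apply_symm_apply]⟩

theorem trans {A : XYGraph k} {B : XYGraph m} {C : XYGraph n}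
    (h : A.Isomorphic B) (h' : B.Isomorphic C) : A.Isomorphic C := by
  obtain ⟨e, he⟩ := h
  obtain ⟨e', he'⟩ := h'
  exact ⟨e.trans e', fun v => (he v).trans (he' (e v))⟩

end Isomorphic

theorem not_adj_of_mem_X_iff (A : XYGraph n) {x y : Fin n} (hxy : x ∈ A.X ↔ y ∈ A.X) :
    ¬A.G.Adj x y := fun h => by
  rcases A.bip x y h with ⟨hx, hy⟩ | ⟨hx, hy⟩ <;> tauto

theorem mem_X_iff_notMem_X_of_adj (A : XYGraph n) {x y : Fin n} (h : A.G.Adj x y) :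
    x ∈ A.X ↔ y ∉ A.X := by
  rcases A.bip x y h with ⟨hx, hy⟩ | ⟨hx, hy⟩ <;> simp [hx, hy]

def comap (A : XYGraph n) (f : Fin m ↪ Fin n) : XYGraph m where
  G := A.G.comap f
  X := Finset.univ.filter (f · ∈ A.X)
  bip i j h := by simpa using A.bip _ _ h

@[simp]
theorem comap_adj (A : XYGraph n) (f : Fin m ↪ Fin n) {i j : Fin m} :
    (A.comap f).G.Adj i j ↔ A.G.Adj (f i) (f j) := Iff.rfl

@[simp]
theorem mem_comap_X (A : XYGraph n) (f : Fin m ↪ Fin n) {i : Fin m} :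
    i ∈ (A.comap f).X ↔ f i ∈ A.X := by
  simp [comap]

theorem comap_isomorphic_comap {A : XYGraph m} {B : XYGraph n} (e : A.G ≃g B.G)
    (he : ∀ v, v ∈ A.X ↔ e v ∈ B.X) (f : Fin k ↪ Fin m) {l : ℕ} (g : Fin l ↪ Fin n)
    (hfg : ∀ x, x ∈ Set.range f ↔ e x ∈ Set.range g) :
    (A.comap f).Isomorphic (B.comap g) := by
  let σ := (Equiv.ofInjective f f.injective).trans
    ((e.toEquiv.subtypeEquiv hfg).trans (Equiv.ofInjective g g.injective).symm)
  have hσ : ∀ i, g (σ i) = e (f i) := fun i => Equiv.apply_ofInjective_symm g.injective _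
  refine .of_equiv σ (fun i j => ?_) (fun i => ?_)
  · simp only [comap_adj, hσ, e.map_adj_iff]
  · simp only [mem_comap_X, hσ, ← he]

def IsUniversal (A : XYGraph n) (u : Fin n) : Prop :=
  u ∈ A.X ∧ ∀ y, y ∉ A.X → A.G.Adj u y

theorem IsUniversal.map {A : XYGraph m} {B : XYGraph n} {u : Fin m} (hu : A.IsUniversal u)
    (e : A.G ≃g B.G) (he : ∀ v, v ∈ A.X ↔ e v ∈ B.X) : B.IsUniversal (e u) := by
  refine ⟨(he u).1 hu.1, fun y hy => ?_⟩
  rw [← e.apply_symm_apply y, e.map_adj_iff]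
  exact hu.2 _ (by rwa [he, e.apply_symm_apply])

theorem exists_iso_apply_eq_of_isUniversal {A : XYGraph n} {u v : Fin n}
    (hu : A.IsUniversal u) (hv : A.IsUniversal v) :
    ∃ e : A.G ≃g A.G, (∀ x, x ∈ A.X ↔ e x ∈ A.X) ∧ e u = v := by
  have hX : ∀ x, Equiv.swap u v x ∈ A.X ↔ x ∈ A.X := by
    intro x
    rcases eq_or_ne x u with rfl | hxu
    · simp [hu.1, hv.1]
    rcases eq_or_ne x v with rfl | hxv
    · simp [hu.1, hv.1]
    rw [Equiv.swap_apply_of_ne_of_ne hxu hxv]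
  have hadj : ∀ x y, x ∈ A.X → y ∉ A.X →
      (A.G.Adj (Equiv.swap u v x) (Equiv.swap u v y) ↔ A.G.Adj x y) := by
    intro x y hx hy
    rw [Equiv.swap_apply_of_ne_of_ne (ne_of_mem_of_not_mem hu.1 hy).symm
      (ne_of_mem_of_not_mem hv.1 hy).symm]
    rcases eq_or_ne x u with rfl | hxu
    · simp [hu.2 y hy, hv.2 y hy]
    rcases eq_or_ne x v with rfl | hxv
    · simp [hu.2 y hy, hv.2 y hy]
    rw [Equiv.swap_apply_of_ne_of_ne hxu hxv]
  refine ⟨⟨Equiv.swap u v, fun {x y} => ?_⟩, fun x => (hX x).symm, Equiv.swap_apply_left u v⟩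
  by_cases hx : x ∈ A.X <;> by_cases hy : y ∈ A.X
  · exact iff_of_false (A.not_adj_of_mem_X_iff (by simp [hX, hx, hy]))
      (A.not_adj_of_mem_X_iff (by simp [hx, hy]))
  · exact hadj x y hx hy
  · rw [A.G.adj_comm, A.G.adj_comm x]
    exact hadj y x hy hx
  · exact iff_of_false (A.not_adj_of_mem_X_iff (by simp [hX, hx, hy]))
      (A.not_adj_of_mem_X_iff (by simp [hx, hy]))

/-- The vertices that survive deleting `u` together with the vertices of `Y` whose only
neighbour is `u`. -/
def keep (A : XYGraph n) (u : Fin n) : Set (Fin n) :=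
  {y | y ≠ u ∧ (y ∈ A.X ∨ ∃ w, w ≠ u ∧ A.G.Adj w y)}

theorem notMem_keep_self (A : XYGraph n) (u : Fin n) : u ∉ A.keep u :=
  fun h => h.1 rfl

theorem card_keep_lt (A : XYGraph n) (u : Fin n) : Nat.card (A.keep u) < n := by
  simpa using Finite.card_subtype_lt (A.notMem_keep_self u)

theorem apply_mem_keep_iff {A : XYGraph m} {B : XYGraph n} (e : A.G ≃g B.G)
    (he : ∀ v, v ∈ A.X ↔ e v ∈ B.X) (u x : Fin m) :
    e x ∈ B.keep (e u) ↔ x ∈ A.keep u := by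
  simp only [keep, Set.mem_ofPred_eq, e.surjective.exists, e.injective.ne_iff, e.map_adj_iff,
    ← he]

theorem mem_X_iff_of_notMem_keep {A : XYGraph n} {u y : Fin n} (hu : u ∈ A.X)
    (hy : y ∉ A.keep u) : y ∈ A.X ↔ y = u := by
  refine ⟨fun h => ?_, fun h => h ▸ hu⟩
  by_contra hyu
  exact hy ⟨hyu, Or.inl h⟩

theorem adj_iff_of_isUniversal {A : XYGraph n} {u : Fin n} (hu : A.IsUniversal u)
    {x y : Fin n} :
    A.G.Adj x y ↔ (x ∈ A.keep u ∧ y ∈ A.keep u ∧ A.G.Adj x y) ∨ (x = u ∧ y ∉ A.X) ∨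
      (y = u ∧ x ∉ A.X) := by
  refine ⟨fun h => ?_, ?_⟩
  · rcases eq_or_ne x u with rfl | hxu
    · exact Or.inr (Or.inl ⟨rfl, (A.mem_X_iff_notMem_X_of_adj h).1 hu.1⟩)
    rcases eq_or_ne y u with rfl | hyu
    · exact Or.inr (Or.inr ⟨rfl, fun hx => (A.mem_X_iff_notMem_X_of_adj h).1 hx hu.1⟩)
    exact Or.inl ⟨⟨hxu, Or.inr ⟨y, hyu, h.symm⟩⟩, ⟨hyu, Or.inr ⟨x, hxu, h⟩⟩, h⟩
  · rintro (⟨-, -, h⟩ | ⟨rfl, hy⟩ | ⟨rfl, hx⟩)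
    · exact h
    · exact hu.2 y hy
    · exact (hu.2 x hx).symm

theorem isomorphic_of_isUniversal {A : XYGraph m} {B : XYGraph n} {u : Fin m} {v : Fin n}
    (hu : A.IsUniversal u) (hv : B.IsUniversal v) (σ : Fin m ≃ Fin n) (hσu : σ u = v)
    (hkeep : ∀ x, σ x ∈ B.keep v ↔ x ∈ A.keep u)
    (hadj : ∀ x ∈ A.keep u, ∀ y ∈ A.keep u, B.G.Adj (σ x) (σ y) ↔ A.G.Adj x y)
    (hX : ∀ x ∈ A.keep u, σ x ∈ B.X ↔ x ∈ A.X) : A.Isomorphic B := by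
  have hX' : ∀ x, σ x ∈ B.X ↔ x ∈ A.X := by
    intro x
    by_cases hx : x ∈ A.keep u
    · exact hX x hx
    rw [mem_X_iff_of_notMem_keep hu.1 hx, mem_X_iff_of_notMem_keep hv.1 ((hkeep x).not.2 hx),
      ← hσu, σ.injective.eq_iff]
  refine .of_equiv σ (fun x y => ?_) hX'
  rw [adj_iff_of_isUniversal hu, adj_iff_of_isUniversal hv, hkeep, hkeep, ← hσu,
    σ.injective.eq_iff, σ.injective.eq_iff, hX', hX']
  refine or_congr ⟨fun ⟨hx, hy, h⟩ => ⟨hx, hy, ?_⟩, fun ⟨hx, hy, h⟩ => ⟨hx, hy, ?_⟩⟩ Iff.rfl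
  · exact (hadj x hx y hy).1 h
  · exact (hadj x hx y hy).2 h

noncomputable def delete (A : XYGraph n) (u : Fin n) : XYGraph (Nat.card (A.keep u)) :=
  A.comap (finEmb (A.keep u))

theorem noIsolateY_delete (A : XYGraph n) (u : Fin n) : NoIsolateY (A.delete u) := by
  intro i hi
  rw [delete, mem_comap_X] at hi
  obtain ⟨-, hiX | ⟨w, hwu, hw⟩⟩ := finEmb_mem (A.keep u) i
  · exact absurd hiX hi
  have hwX : w ∈ A.X := (A.mem_X_iff_notMem_X_of_adj hw).2 hi
  obtain ⟨j, rfl⟩ : w ∈ Set.range (finEmb (A.keep u)) := by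
    rw [range_finEmb]
    exact ⟨hwu, Or.inl hwX⟩
  exact ⟨j, by rwa [delete, mem_comap_X], hw⟩

theorem delete_isomorphic_delete_apply {A : XYGraph m} {B : XYGraph n} (e : A.G ≃g B.G)
    (he : ∀ v, v ∈ A.X ↔ e v ∈ B.X) (u : Fin m) :
    (A.delete u).Isomorphic (B.delete (e u)) :=
  comap_isomorphic_comap e he _ _ fun x => by
    rw [range_finEmb, range_finEmb, apply_mem_keep_iff e he]

theorem Isomorphic.delete {A : XYGraph m} {B : XYGraph n} (h : A.Isomorphic B) {u : Fin m}
    {v : Fin n} (hu : A.IsUniversal u) (hv : B.IsUniversal v) :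
    (A.delete u).Isomorphic (B.delete v) := by
  obtain ⟨e, he⟩ := h
  obtain ⟨s, hs, hsv⟩ := exists_iso_apply_eq_of_isUniversal (hu.map e he) hv
  have := delete_isomorphic_delete_apply (e.trans s) (fun x => (he x).trans (hs (e x))) u
  rwa [RelIso.trans_apply, hsv] at this

theorem Isomorphic.of_delete {A B : XYGraph n} {u v : Fin n} (hu : A.IsUniversal u)
    (hv : B.IsUniversal v) (h : (A.delete u).Isomorphic (B.delete v)) : A.Isomorphic B := by
  obtain ⟨e, he⟩ := h
  set f := finEmb (A.keep u)
  set g := finEmb (B.keep v)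
  obtain ⟨σ, hσu, hσ⟩ := Equiv.Perm.exists_extending_pair_of_notMem_range (u := u) (v := v)
    f.injective (g.injective.comp e.injective)
    (by rw [range_finEmb]; exact A.notMem_keep_self u)
    (by rw [e.surjective.range_comp, range_finEmb]; exact B.notMem_keep_self v)
  have hf : ∀ x, x ∈ A.keep u ↔ ∃ i, f i = x := fun x => by rw [← Set.mem_range, range_finEmb]
  have hg : ∀ x, x ∈ B.keep v ↔ ∃ i, g i = x := fun x => by rw [← Set.mem_range, range_finEmb]
  refine isomorphic_of_isUniversal hu hv σ hσu (fun x => ?_) ?_ ?_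
  · rw [hf, hg]
    refine ⟨fun ⟨j, hj⟩ => ⟨e.symm j, σ.injective ?_⟩, fun ⟨i, hi⟩ => ⟨e i, by rw [← hi, hσ]; rfl⟩⟩
    rw [hσ, Function.comp_apply, RelIso.apply_symm_apply, hj]
  · simp only [hf]
    rintro _ ⟨i, rfl⟩ _ ⟨j, rfl⟩
    rw [hσ, hσ]
    exact e.map_adj_iff
  · simp only [hf]
    rintro _ ⟨i, rfl⟩
    rw [hσ]
    exact (B.mem_comap_X g).symm.trans ((he i).symm.trans (A.mem_comap_X f))

section Cone

variable (B : XYGraph m) (ι : Fin m ↪ Fin n) (c : Fin n)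

def coneX : Finset (Fin n) := insert c (B.X.map ι)

theorem self_mem_coneX : c ∈ B.coneX ι c := Finset.mem_insert_self _ _

variable {B ι c}

theorem apply_mem_coneX (hc : c ∉ Set.range ι) (i : Fin m) : ι i ∈ B.coneX ι c ↔ i ∈ B.X := by
  simp [coneX, show ι i ≠ c from fun h => hc ⟨i, h⟩]

theorem mem_coneX_of_notMem_range {x : Fin n} (hx : x ∉ Set.range ι) :
    x ∈ B.coneX ι c ↔ x = c := by
  simp only [coneX, Finset.mem_insert, Finset.mem_map, or_iff_left_iff_imp]
  rintro ⟨i, -, rfl⟩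
  exact absurd ⟨i, rfl⟩ hx

variable (B ι c) in
def coneGraph : SimpleGraph (Fin n) :=
  B.G.map ι ⊔ SimpleGraph.fromRel fun a b => a = c ∧ b ∉ B.coneX ι c

theorem coneGraph_adj {a b : Fin n} :
    (B.coneGraph ι c).Adj a b ↔ (∃ i j, B.G.Adj i j ∧ ι i = a ∧ ι j = b) ∨
      (a = c ∧ b ∉ B.coneX ι c) ∨ (b = c ∧ a ∉ B.coneX ι c) := by
  have hne : ∀ {x y}, x = c → y ∉ B.coneX ι c → x ≠ y := by
    rintro x y rfl hy rfl
    exact hy (self_mem_coneX B ι _)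
  simp only [coneGraph, SimpleGraph.sup_adj, SimpleGraph.map_adj, SimpleGraph.fromRel_adj]
  refine or_congr Iff.rfl ⟨fun h => h.2, fun h => ⟨?_, h⟩⟩
  rcases h with ⟨hx, hy⟩ | ⟨hy, hx⟩
  · exact hne hx hy
  · exact (hne hy hx).symm

variable (B ι c) in
/-- A copy of `B` along `ι`, a new vertex `c` of `X` adjacent to every vertex of `Y`, and
pendant vertices of `Y` attached to `c` everywhere else. -/
def cone (hc : c ∉ Set.range ι) : XYGraph n where
  G := B.coneGraph ι c
  X := B.coneX ι c
  bip a b h := by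
    rcases coneGraph_adj.1 h with ⟨i, j, hij, rfl, rfl⟩ | ⟨rfl, hb⟩ | ⟨rfl, ha⟩
    · simpa only [apply_mem_coneX hc] using B.bip i j hij
    · exact Or.inl ⟨self_mem_coneX B ι _, hb⟩
    · exact Or.inr ⟨ha, self_mem_coneX B ι _⟩

variable (hc : c ∉ Set.range ι)

theorem isUniversal_cone : (B.cone ι c hc).IsUniversal c :=
  ⟨self_mem_coneX B ι c, fun _ hy => coneGraph_adj.2 (Or.inr (Or.inl ⟨rfl, hy⟩))⟩

theorem noIsolateY_cone : NoIsolateY (B.cone ι c hc) :=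
  fun y hy => ⟨c, self_mem_coneX B ι c, (isUniversal_cone hc).2 y hy⟩

theorem cone_adj_apply {i j : Fin m} : (B.cone ι c hc).G.Adj (ι i) (ι j) ↔ B.G.Adj i j := by
  refine ⟨fun h => ?_, fun h => coneGraph_adj.2 (Or.inl ⟨i, j, h, rfl, rfl⟩)⟩
  rcases coneGraph_adj.1 h with ⟨i', j', h', hi, hj⟩ | ⟨hi, -⟩ | ⟨hj, -⟩
  · rwa [← ι.injective hi, ← ι.injective hj]
  · exact absurd ⟨i, hi⟩ hc
  · exact absurd ⟨j, hj⟩ hc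

theorem keep_cone (hB : NoIsolateY B) : (B.cone ι c hc).keep c = Set.range ι := by
  ext x
  refine ⟨fun ⟨hxc, hx⟩ => ?_, ?_⟩
  · by_contra hxι
    rcases hx with hxX | ⟨w, hwc, hw⟩
    · exact hxc ((mem_coneX_of_notMem_range hxι).1 hxX)
    rcases coneGraph_adj.1 hw with ⟨i, j, -, -, rfl⟩ | ⟨hw, -⟩ | ⟨rfl, -⟩
    · exact hxι ⟨j, rfl⟩
    · exact hwc hw
    · exact hxc rfl
  · rintro ⟨i, rfl⟩
    refine ⟨fun h => hc ⟨i, h⟩, ?_⟩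
    by_cases hi : i ∈ B.X
    · exact Or.inl ((apply_mem_coneX hc i).2 hi)
    obtain ⟨j, -, hj⟩ := hB i hi
    exact Or.inr ⟨ι j, fun h => hc ⟨j, h⟩, (cone_adj_apply hc).2 hj⟩

theorem delete_cone_isomorphic (hB : NoIsolateY B) :
    ((B.cone ι c hc).delete c).Isomorphic B := by
  refine (comap_isomorphic_comap Iso.refl (fun _ => Iff.rfl) _ ι fun x => ?_).trans
    (.of_equiv (Equiv.refl _) (fun _ _ => (cone_adj_apply hc).symm)
      (fun _ => (((B.cone ι c hc).mem_comap_X ι).trans (apply_mem_coneX hc _)).symm))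
  rw [range_finEmb, keep_cone hc hB]
  rfl

end Cone

theorem isUniversal_choose {A : XYGraph n} (h : HasUniversalX A) : A.IsUniversal h.choose :=
  h.choose_spec

noncomputable def deleteUniversal (A : {A : XYGraph n // NoIsolateY A ∧ HasUniversalX A}) :
    Σ t : Fin n, {B : XYGraph t.val // NoIsolateY B} :=
  ⟨⟨_, A.1.card_keep_lt A.2.2.choose⟩, A.1.delete A.2.2.choose, A.1.noIsolateY_delete _⟩

theorem deleteUniversal_rel_deleteUniversal_iff
    {A B : {A : XYGraph n // NoIsolateY A ∧ HasUniversalX A}} :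
    SmallXYRel n (deleteUniversal A) (deleteUniversal B) ↔ UXYRel n A B :=
  ⟨Isomorphic.of_delete (isUniversal_choose A.2.2) (isUniversal_choose B.2.2),
    fun h => Isomorphic.delete h (isUniversal_choose A.2.2) (isUniversal_choose B.2.2)⟩

theorem exists_deleteUniversal_rel (B : Σ t : Fin n, {B : XYGraph t.val // NoIsolateY B}) :
    ∃ A, SmallXYRel n (deleteUniversal A) B := by
  obtain ⟨t, B, hB⟩ := B
  have hc : t ∉ Set.range (Fin.castLEEmb t.2.le) := fun ⟨i, hi⟩ => by
    simpa [← hi] using i.2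
  refine ⟨⟨B.cone _ t hc, noIsolateY_cone hc, t, isUniversal_cone hc⟩, ?_⟩
  exact ((Isomorphic.refl _).delete (isUniversal_choose _) (isUniversal_cone hc)).trans
    (delete_cone_isomorphic hc hB)

theorem smallXYRel_equivalence : Equivalence (SmallXYRel n) :=
  ⟨fun A => Isomorphic.refl A.2.1, Isomorphic.symm, Isomorphic.trans⟩

end XYGraph

/-- Compilation theorem for XY-graphs: there is a bijection between isomorphism
classes of unbalanced XY-graphs on `n` vertices and isomorphism classes of
XY-graphs with no isolates in `Y` on `t` vertices, `0 ≤ t ≤ n − 1`. -/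
theorem xy_compilation (n : ℕ) :
    Nonempty (Quot (UXYRel n) ≃ Quot (SmallXYRel n)) :=
  ⟨.ofBijective _ (Quot.map_bijective XYGraph.smallXYRel_equivalence
    (fun _ _ => XYGraph.deleteUniversal_rel_deleteUniversal_iff.2)
    (fun _ _ => XYGraph.deleteUniversal_rel_deleteUniversal_iff.1)
    XYGraph.exists_deleteUniversal_rel)⟩
end
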